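/- arXiv:2201.10046 — 8 statements merged into one kernel-verified Lean document; each statement's English description precedes it below -/
import Mathlib

section
/- Let φ ∈ C([0,1]), K(s,ζ) = ∫_{max(s,ζ)}^1 cos(φ(σ)) dσ, and λ ∈ ℝ with λ ∉ {−1, 0}. If μ ∈ L²(0,1) satisfies −(1+λ) μ(s) + ∫_0^1 K(s,ζ) μ(ζ) dζ = 0 for a.e. s, then μ agrees a.e. with a C¹ function, and θ(s) := ∫_0^s μ(σ) dσ satisfies (1+λ) θ''(s) + cos(φ(s)) θ(s) = 0 on [0,1] with θ(0) = 0. Consequently the eigenspace of the integral operator 𝒦 for any eigenvalue 1+λ ≠ 0, 1 is at most one-dimensional. -/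
open MeasureTheory Set

/-! Writing `θ` for the primitive of `μ`, Fubini turns `∫ K(s,ζ) μ(ζ) dζ` into
`∫_s^1 cos φ · θ`, so the eigenvalue equation says that `μ` agrees a.e. with the `C¹` function
`ν = (1+λ)⁻¹ ∫_s^1 cos φ · θ`, whose derivative is `-(cos φ / (1+λ)) θ`. Hence `(θ, ν)` solves a
linear first-order system with `θ(0) = 0`. For two eigenfunctions, the combination
`ν₂(0) (θ₁, ν₁) - ν₁(0) (θ₂, ν₂)` solves the same system with zero initial data, so it vanishes by
uniqueness for Lipschitz ODEs. -/

def SolvesLinearSecondOrder (a : ℝ → ℝ) (I : Set ℝ) (θ ν : ℝ → ℝ) : Prop :=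
  ∀ t ∈ I, HasDerivWithinAt θ (ν t) I t ∧ HasDerivWithinAt ν (a t * θ t) I t

namespace SolvesLinearSecondOrder

variable {a : ℝ → ℝ} {I : Set ℝ} {θ ν θ₁ ν₁ θ₂ ν₂ : ℝ → ℝ}

theorem continuousOn_deriv (h : SolvesLinearSecondOrder a I θ ν) : ContinuousOn ν I :=
  fun t ht => (h t ht).2.continuousWithinAt

theorem linear_combination (h₁ : SolvesLinearSecondOrder a I θ₁ ν₁)
    (h₂ : SolvesLinearSecondOrder a I θ₂ ν₂) (c₁ c₂ : ℝ) :
    SolvesLinearSecondOrder a I (fun t => c₁ * θ₁ t + c₂ * θ₂ t)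
      (fun t => c₁ * ν₁ t + c₂ * ν₂ t) := by
  intro t ht
  refine ⟨((h₁ t ht).1.const_mul c₁).add ((h₂ t ht).1.const_mul c₂), ?_⟩
  exact (((h₁ t ht).2.const_mul c₁).add ((h₂ t ht).2.const_mul c₂)).congr_deriv (by ring)

theorem eqOn_zero {t₀ t₁ : ℝ} (h : SolvesLinearSecondOrder a (Icc t₀ t₁) θ ν)
    (ha : ContinuousOn a (Icc t₀ t₁)) (hθ : θ t₀ = 0) (hν : ν t₀ = 0) :
    EqOn ν 0 (Icc t₀ t₁) := by
  obtain ⟨A, hA⟩ := isCompact_Icc.bddAbove_image ha.nnnorm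
  let v : ℝ → ℝ × ℝ → ℝ × ℝ := fun t p => (p.2, a t * p.1)
  have hv : ∀ t ∈ Ico t₀ t₁, LipschitzOnWith (max 1 A) (v t) univ := fun t ht =>
    have haA : ‖a t‖₊ ≤ A := hA (mem_image_of_mem _ (Ico_subset_Icc_self ht))
    (LipschitzWith.prod_snd.prodMk ((lipschitzWith_smul (a t)).comp LipschitzWith.prod_fst)
      |>.weaken (max_le_max le_rfl (by simpa using haA))).lipschitzOnWith
  have hsol : EqOn (fun t => (θ t, ν t)) (fun _ => 0) (Icc t₀ t₁) := by
    refine ODE_solution_unique_of_mem_Icc_right hv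
      (fun t ht => (h t ht).1.continuousWithinAt.prodMk (h t ht).2.continuousWithinAt)
      (fun t ht => ?_) (fun _ _ => mem_univ _) continuousOn_const
      (fun t _ => by convert hasDerivWithinAt_const t _ (0 : ℝ × ℝ); simp [v])
      (fun _ _ => mem_univ _) (by simp [hθ, hν])
    have ht' := Ico_subset_Icc_self ht
    exact ((h t ht').1.prodMk (h t ht').2).mono_of_mem_nhdsWithin (Icc_mem_nhdsGE_of_mem ht)
  exact fun t ht => congrArg Prod.snd (hsol ht)

theorem exists_ne_zero_combination_eq_zero {t₀ t₁ : ℝ} (ha : ContinuousOn a (Icc t₀ t₁))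
    (h₁ : SolvesLinearSecondOrder a (Icc t₀ t₁) θ₁ ν₁)
    (h₂ : SolvesLinearSecondOrder a (Icc t₀ t₁) θ₂ ν₂) (hθ₁ : θ₁ t₀ = 0) (hθ₂ : θ₂ t₀ = 0) :
    ∃ c₁ c₂ : ℝ, ¬(c₁ = 0 ∧ c₂ = 0) ∧
      EqOn (fun t => c₁ * ν₁ t + c₂ * ν₂ t) 0 (Icc t₀ t₁) := by
  by_cases hν₁ : ν₁ t₀ = 0
  · exact ⟨1, 0, by simp,
      (h₁.linear_combination h₂ 1 0).eqOn_zero ha (by simp [hθ₁]) (by simp [hν₁])⟩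
  · exact ⟨ν₂ t₀, -ν₁ t₀, fun h => hν₁ (neg_eq_zero.1 h.2),
      (h₁.linear_combination h₂ _ _).eqOn_zero ha (by simp [hθ₁, hθ₂]) (by ring)⟩

end SolvesLinearSecondOrder

theorem hasDerivWithinAt_integral_of_ae_eq {f g : ℝ → ℝ} {a b s : ℝ}
    (hfg : f =ᵐ[volume.restrict (Icc a b)] g) (hg : ContinuousOn g (Icc a b))
    (hs : s ∈ Icc a b) :
    HasDerivWithinAt (fun x => ∫ t in a..x, f t) (g s) (Icc a b) s := by
  have hprim : EqOn (fun x => ∫ t in a..x, f t) (fun x => ∫ t in a..x, g t) (Icc a b) :=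
    fun x hx => intervalIntegral.integral_congr_ae_restrict <| ae_restrict_of_ae_restrict_of_subset
      (by rw [uIoc_of_le hx.1]; exact Ioc_subset_Icc_self.trans (Icc_subset_Icc_right hx.2))
      hfg
  have hint : IntervalIntegrable g volume a s :=
    (hg.mono (Icc_subset_Icc_right hs.2)).intervalIntegrable_of_Icc hs.1
  have : Fact (s ∈ Icc a b) := ⟨hs⟩
  have hftc := intervalIntegral.integral_hasDerivWithinAt_right (s := Icc a b) (t := Icc a b) hint
    ⟨Icc a b, self_mem_nhdsWithin, hg.aestronglyMeasurable measurableSet_Icc⟩ (hg s hs)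
  exact hftc.congr hprim (hprim hs)

/-- Both sides are the integral of `c σ * μ ζ` over `{ζ < σ}` in `(a, b] × (s, b]`. -/
theorem integral_integral_max_mul {c μ : ℝ → ℝ} {a b s : ℝ} (hs : s ∈ Icc a b)
    (hc : IntegrableOn c (Ioc s b)) (hμ : IntervalIntegrable μ volume a b) :
    ∫ ζ in a..b, (∫ σ in max s ζ..b, c σ) * μ ζ = ∫ σ in s..b, c σ * ∫ ζ in a..σ, μ ζ := by
  rw [intervalIntegral.integral_of_le (hs.1.trans hs.2), intervalIntegral.integral_of_le hs.2]
  have hinner : ∀ ζ ∈ Ioc a b,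
      (∫ σ in max s ζ..b, c σ) * μ ζ = ∫ σ in Ioc s b, (Ioi ζ).indicator c σ * μ ζ := by
    intro ζ hζ
    have hset : Ioc s b ∩ Ioi ζ = Ioc (max s ζ) b := by
      ext σ; simp only [mem_inter_iff, mem_Ioc, mem_Ioi, max_lt_iff]; tauto
    simp_rw [← indicator_mul_const, setIntegral_indicator measurableSet_Ioi, hset,
      intervalIntegral.integral_of_le (max_le hs.2 hζ.2), integral_mul_const]
  have hswap : Integrable (Function.uncurry fun ζ σ => (Ioi ζ).indicator c σ * μ ζ)
      ((volume.restrict (Ioc a b)).prod (volume.restrict (Ioc s b))) := by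
    have heq : (Function.uncurry fun ζ σ => (Ioi ζ).indicator c σ * μ ζ)
        = {q : ℝ × ℝ | q.1 < q.2}.indicator (fun q => μ q.1 * c q.2) := by
      ext ⟨ζ, σ⟩
      by_cases h : ζ < σ <;> simp [h, mul_comm]
    rw [heq]
    exact (hμ.1.mul_prod hc).indicator (measurableSet_lt measurable_fst measurable_snd)
  rw [setIntegral_congr_fun measurableSet_Ioc hinner, integral_integral_swap hswap]
  refine setIntegral_congr_fun measurableSet_Ioc fun σ hσ => ?_
  have hset : Ioc a b ∩ Iio σ = Ioo a σ := by
    ext ζ; simp only [mem_inter_iff, mem_Ioc, mem_Iio, mem_Ioo]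
    exact ⟨fun h => ⟨h.1.1, h.2⟩, fun h => ⟨⟨h.1, h.2.le.trans hσ.2⟩, h.2⟩⟩
  have hind : ∀ ζ, (Ioi ζ).indicator c σ * μ ζ = (Iio σ).indicator μ ζ * c σ := by
    intro ζ; by_cases h : ζ < σ <;> simp [h, mul_comm]
  simp_rw [hind, integral_mul_const, setIntegral_indicator measurableSet_Iio, hset,
    ← integral_Ioc_eq_integral_Ioo, ← intervalIntegral.integral_of_le (hs.1.trans hσ.1.le),
    mul_comm]

theorem hasDerivWithinAt_integral_lower {g : ℝ → ℝ} {a b s : ℝ} (hg : ContinuousOn g (Icc a b))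
    (hs : s ∈ Icc a b) :
    HasDerivWithinAt (fun x => ∫ t in x..b, g t) (-g s) (Icc a b) s := by
  have hint : ∀ x ∈ Icc a b, IntervalIntegrable g volume a x := fun x hx =>
    (hg.mono (Icc_subset_Icc_right hx.2)).intervalIntegrable_of_Icc hx.1
  have hsplit : EqOn (fun x => ∫ t in x..b, g t)
      (fun x => (∫ t in a..b, g t) - ∫ t in a..x, g t) (Icc a b) := fun x hx =>
    (intervalIntegral.integral_interval_sub_left (hint b ⟨hx.1.trans hx.2, le_rfl⟩)
      (hint x hx)).symm
  have hderiv := (hasDerivWithinAt_integral_of_ae_eq .rfl hg hs).const_sub (∫ t in a..b, g t)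
  exact hderiv.congr hsplit (hsplit hs)

theorem exists_solvesLinearSecondOrder_of_eigen {c μ : ℝ → ℝ} {a b κ : ℝ}
    (hc : ContinuousOn c (Icc a b)) (hκ : κ ≠ 0) (hμ : IntervalIntegrable μ volume a b)
    (heig : ∀ᵐ s ∂volume.restrict (Icc a b),
      -κ * μ s + ∫ ζ in a..b, (∫ σ in max s ζ..b, c σ) * μ ζ = 0) :
    ∃ ν : ℝ → ℝ, μ =ᵐ[volume.restrict (Icc a b)] ν ∧
      SolvesLinearSecondOrder (fun s => -(c s / κ)) (Icc a b) (fun x => ∫ σ in a..x, μ σ) ν := by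
  set θ : ℝ → ℝ := fun x => ∫ σ in a..x, μ σ
  have hθ : ContinuousOn θ (Icc a b) :=
    (intervalIntegral.continuousOn_primitive_interval' hμ left_mem_uIcc).mono Icc_subset_uIcc
  have hg : ContinuousOn (fun σ => c σ * θ σ) (Icc a b) := hc.mul hθ
  set ν : ℝ → ℝ := fun x => (∫ σ in x..b, c σ * θ σ) / κ
  have hν : ∀ s ∈ Icc a b, HasDerivWithinAt ν (-(c s / κ) * θ s) (Icc a b) s := fun s hs =>
    ((hasDerivWithinAt_integral_lower hg hs).div_const κ).congr_deriv (by ring)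
  have hμν : μ =ᵐ[volume.restrict (Icc a b)] ν := by
    filter_upwards [heig, ae_restrict_mem measurableSet_Icc] with s hs hmem
    rw [integral_integral_max_mul hmem
      ((hc.mono (Icc_subset_Icc_left hmem.1)).integrableOn_Icc.mono_set Ioc_subset_Icc_self) hμ]
      at hs
    simp only [ν]
    field_simp
    linarith
  have hνc : ContinuousOn ν (Icc a b) := fun s hs => (hν s hs).continuousWithinAt
  exact ⟨ν, hμν, fun s hs => ⟨hasDerivWithinAt_integral_of_ae_eq hμν hνc hs, hν s hs⟩⟩

theorem stmt_3_general (φ : ℝ → ℝ) (hφ : Continuous φ)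
    (K : ℝ → ℝ → ℝ)
    (hK : ∀ s ζ, K s ζ = ∫ σ in max s ζ..1, Real.cos (φ σ))
    (lam : ℝ) (hlam1 : lam ≠ -1) :
    (∀ μ : ℝ → ℝ, IntervalIntegrable μ volume 0 1 →
      (∀ᵐ s ∂(volume.restrict (Icc (0:ℝ) 1)),
        -(1 + lam) * μ s + (∫ ζ in (0:ℝ)..1, K s ζ * μ ζ) = 0) →
      ∃ ν : ℝ → ℝ,
        (∀ᵐ s ∂(volume.restrict (Icc (0:ℝ) 1)), μ s = ν s) ∧
        ContinuousOn ν (Icc 0 1) ∧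
        (∀ s ∈ Icc (0:ℝ) 1,
          HasDerivWithinAt (fun x => ∫ σ in (0:ℝ)..x, μ σ) (ν s) (Icc 0 1) s) ∧
        (∀ s ∈ Icc (0:ℝ) 1,
          HasDerivWithinAt ν
            (-(Real.cos (φ s) / (1 + lam)) * ∫ σ in (0:ℝ)..s, μ σ) (Icc 0 1) s)) ∧
    (∀ μ₁ μ₂ : ℝ → ℝ, IntervalIntegrable μ₁ volume 0 1 → IntervalIntegrable μ₂ volume 0 1 →
      (∀ᵐ s ∂(volume.restrict (Icc (0:ℝ) 1)),
        -(1 + lam) * μ₁ s + (∫ ζ in (0:ℝ)..1, K s ζ * μ₁ ζ) = 0) →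
      (∀ᵐ s ∂(volume.restrict (Icc (0:ℝ) 1)),
        -(1 + lam) * μ₂ s + (∫ ζ in (0:ℝ)..1, K s ζ * μ₂ ζ) = 0) →
      ∃ c₁ c₂ : ℝ, ¬(c₁ = 0 ∧ c₂ = 0) ∧
        (∀ᵐ s ∂(volume.restrict (Icc (0:ℝ) 1)), c₁ * μ₁ s + c₂ * μ₂ s = 0)) := by
  have hκ : 1 + lam ≠ 0 := fun h => hlam1 (by linarith)
  have hcos : ContinuousOn (fun σ => Real.cos (φ σ)) (Icc 0 1) :=
    (Real.continuous_cos.comp hφ).continuousOn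
  have regular : ∀ μ : ℝ → ℝ, IntervalIntegrable μ volume 0 1 →
      (∀ᵐ s ∂(volume.restrict (Icc (0:ℝ) 1)),
        -(1 + lam) * μ s + (∫ ζ in (0:ℝ)..1, K s ζ * μ ζ) = 0) →
      ∃ ν : ℝ → ℝ, μ =ᵐ[volume.restrict (Icc 0 1)] ν ∧
        SolvesLinearSecondOrder (fun s => -(Real.cos (φ s) / (1 + lam))) (Icc 0 1)
          (fun x => ∫ σ in (0:ℝ)..x, μ σ) ν := by
    intro μ hμ heig
    simp only [hK] at heig
    exact exists_solvesLinearSecondOrder_of_eigen hcos hκ hμ heig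
  refine ⟨fun μ hμ heig => ?_, fun μ₁ μ₂ hμ₁ hμ₂ heig₁ heig₂ => ?_⟩
  · obtain ⟨ν, hμν, hsol⟩ := regular μ hμ heig
    exact ⟨ν, hμν, hsol.continuousOn_deriv, fun s hs => (hsol s hs).1, fun s hs => (hsol s hs).2⟩
  · obtain ⟨ν₁, hμν₁, hsol₁⟩ := regular μ₁ hμ₁ heig₁
    obtain ⟨ν₂, hμν₂, hsol₂⟩ := regular μ₂ hμ₂ heig₂
    obtain ⟨c₁, c₂, hc, hzero⟩ := hsol₁.exists_ne_zero_combination_eq_zero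
      (hcos.div_const _).neg hsol₂ (by simp) (by simp)
    refine ⟨c₁, c₂, hc, ?_⟩
    filter_upwards [hμν₁, hμν₂, ae_restrict_mem measurableSet_Icc] with s hs₁ hs₂ hs
    rw [hs₁, hs₂]
    exact hzero hs

/-- any `L²` eigenfunction of the integral operator with kernel
`K(s,ζ) = ∫_{max(s,ζ)}^1 cos(φ(σ)) dσ` for an eigenvalue `1 + λ ∉ {0, 1}` agrees a.e.
with a `C¹` function, its primitive `θ` solves `(1+λ) θ'' + cos(φ) θ = 0`, `θ(0) = 0`,
and consequently each such eigenspace is at most one-dimensional. -/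
theorem stmt_3 (φ : ℝ → ℝ) (hφ : Continuous φ)
    (K : ℝ → ℝ → ℝ)
    (hK : ∀ s ζ, K s ζ = ∫ σ in max s ζ..1, Real.cos (φ σ))
    (lam : ℝ) (hlam1 : lam ≠ -1) (hlam0 : lam ≠ 0) :
    (∀ μ : ℝ → ℝ, IntervalIntegrable μ volume 0 1 →
      (∀ᵐ s ∂(volume.restrict (Icc (0:ℝ) 1)),
        -(1 + lam) * μ s + (∫ ζ in (0:ℝ)..1, K s ζ * μ ζ) = 0) →
      ∃ ν : ℝ → ℝ,
        (∀ᵐ s ∂(volume.restrict (Icc (0:ℝ) 1)), μ s = ν s) ∧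
        ContinuousOn ν (Icc 0 1) ∧
        (∀ s ∈ Icc (0:ℝ) 1,
          HasDerivWithinAt (fun x => ∫ σ in (0:ℝ)..x, μ σ) (ν s) (Icc 0 1) s) ∧
        (∀ s ∈ Icc (0:ℝ) 1,
          HasDerivWithinAt ν
            (-(Real.cos (φ s) / (1 + lam)) * ∫ σ in (0:ℝ)..s, μ σ) (Icc 0 1) s)) ∧
    (∀ μ₁ μ₂ : ℝ → ℝ, IntervalIntegrable μ₁ volume 0 1 → IntervalIntegrable μ₂ volume 0 1 →
      (∀ᵐ s ∂(volume.restrict (Icc (0:ℝ) 1)),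
        -(1 + lam) * μ₁ s + (∫ ζ in (0:ℝ)..1, K s ζ * μ₁ ζ) = 0) →
      (∀ᵐ s ∂(volume.restrict (Icc (0:ℝ) 1)),
        -(1 + lam) * μ₂ s + (∫ ζ in (0:ℝ)..1, K s ζ * μ₂ ζ) = 0) →
      ∃ c₁ c₂ : ℝ, ¬(c₁ = 0 ∧ c₂ = 0) ∧
        (∀ᵐ s ∂(volume.restrict (Icc (0:ℝ) 1)), c₁ * μ₁ s + c₂ * μ₂ s = 0)) :=
  stmt_3_general φ hφ K hK lam hlam1
end

section
/- Let φ ∈ C²([0,1]) satisfy φ'' + γ sin φ = 0 with φ(0) = 0, and let θ₀ ∈ C²([0,1]) be the unique solution of θ'' + γ cos(φ) θ = 0 with θ(0) = 0, θ'(0) = 1. Then the pair (μ₀, μ₀°) = (θ₀', θ₀'(1)) satisfies −μ₀(s) + μ₀° + γ ∫_0^1 K(s,ζ) μ₀(ζ) dζ = 0 for all s ∈ [0,1], where K(s,ζ) = ∫_{max(s,ζ)}^1 cos(φ(σ)) dσ; i.e., (θ₀', θ₀'(1)) lies in the kernel of the linearized operator ℒ(ξ, ξ°) = (ξ° − ξ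 + γ 𝒦ξ, 0). -/
open MeasureTheory Set intervalIntegral

/-!
With `F t = ∫_t^1 cos φ` the kernel is `K(s, ζ) = F (max s ζ)`. Splitting `∫_0^1` at `s`, the part
over `[0, s]` is `F s · θ₀ s` (as `θ₀ 0 = 0`), and integrating by parts over `[s, 1]` (where
`F' = -cos φ`, `F 1 = 0`) gives `-F s · θ₀ s + ∫_s^1 cos φ · θ₀`. Hence
`γ ∫_0^1 K(s, ·) θ₀' = γ ∫_s^1 cos φ · θ₀ = θ₀'(s) - θ₀'(1)` by the equation for `θ₀`.
-/

section

variable {a b s : ℝ} {f f' c θ θ' : ℝ → ℝ}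

theorem integral_eq_sub_of_hasDerivWithinAt_Icc (hab : a ≤ b)
    (hf : ∀ x ∈ Icc a b, HasDerivWithinAt f (f' x) (Icc a b) x)
    (hf' : IntervalIntegrable f' volume a b) : ∫ x in a..b, f' x = f b - f a :=
  integral_eq_sub_of_hasDerivAt_of_le hab (fun x hx => (hf x hx).continuousWithinAt)
    (fun x hx => (hf x (Ioo_subset_Icc_self hx)).hasDerivAt (Icc_mem_nhds hx.1 hx.2)) hf'

theorem forall_hasDerivWithinAt_Icc_mono {a' b' : ℝ} (h : a ≤ a') (h' : b' ≤ b)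
    (hf : ∀ x ∈ Icc a b, HasDerivWithinAt f (f' x) (Icc a b) x) :
    ∀ x ∈ Icc a' b', HasDerivWithinAt f (f' x) (Icc a' b') x := fun x hx =>
  (hf x (Icc_subset_Icc h h' hx)).mono (Icc_subset_Icc h h')

theorem continuousOn_integral_left_Icc (hab : a ≤ b) (hc : ContinuousOn c (Icc a b)) :
    ContinuousOn (fun t => ∫ σ in t..b, c σ) (Icc a b) := by
  rw [← uIcc_of_le hab] at hc ⊢
  exact continuousOn_primitive_interval_left (hc.integrableOn_compact isCompact_uIcc)

theorem hasDerivAt_integral_left_of_mem_Ioo (hc : ContinuousOn c (Icc a b)) {x : ℝ}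
    (hx : x ∈ Ioo a b) : HasDerivAt (fun t => ∫ σ in t..b, c σ) (-c x) x :=
  integral_hasDerivAt_left
    (hc.mono (uIcc_subset_Icc (Ioo_subset_Icc_self hx)
      (right_mem_Icc.2 (hx.1.trans hx.2).le))).intervalIntegrable
    ((hc.mono Ioo_subset_Icc_self).stronglyMeasurableAtFilter isOpen_Ioo x hx)
    (hc.continuousAt (Icc_mem_nhds hx.1 hx.2))

theorem integral_integral_max_mul_deriv (hc : ContinuousOn c (Icc a b))
    (hθ : ∀ x ∈ Icc a b, HasDerivWithinAt θ (θ' x) (Icc a b) x)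
    (hθ' : ContinuousOn θ' (Icc a b)) (hθa : θ a = 0) (hs : s ∈ Icc a b) :
    ∫ ζ in a..b, (∫ σ in max s ζ..b, c σ) * θ' ζ = ∫ ζ in s..b, c ζ * θ ζ := by
  obtain ⟨has, hsb⟩ := hs
  have hab := has.trans hsb
  set F : ℝ → ℝ := fun t => ∫ σ in t..b, c σ with hF_def
  have hF : ContinuousOn F (Icc a b) := continuousOn_integral_left_Icc hab hc
  have hθc : ContinuousOn θ (Icc a b) := fun x hx => (hθ x hx).continuousWithinAt
  have hsub_left : uIcc a s ⊆ Icc a b := uIcc_subset_Icc (left_mem_Icc.2 hab) ⟨has, hsb⟩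
  have hsub_right : uIcc s b ⊆ Icc a b := uIcc_subset_Icc ⟨has, hsb⟩ (right_mem_Icc.2 hab)
  have hkernel : ContinuousOn (fun ζ => F (max s ζ) * θ' ζ) (Icc a b) :=
    (hF.comp (continuous_const.max continuous_id).continuousOn
      fun ζ hζ => ⟨le_max_of_le_left has, max_le hsb hζ.2⟩).mul hθ'
  have hleft : ∫ ζ in a..s, F (max s ζ) * θ' ζ = F s * θ s := by
    calc ∫ ζ in a..s, F (max s ζ) * θ' ζ = ∫ ζ in a..s, F s * θ' ζ :=
          integral_congr fun ζ hζ => by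
            rw [uIcc_of_le has] at hζ
            simp only [max_eq_left hζ.2]
      _ = F s * (θ s - θ a) := by
          rw [intervalIntegral.integral_const_mul, integral_eq_sub_of_hasDerivWithinAt_Icc has
            (forall_hasDerivWithinAt_Icc_mono le_rfl hsb hθ)
            (hθ'.mono hsub_left).intervalIntegrable]
      _ = F s * θ s := by rw [hθa, sub_zero]
  have hright : ∫ ζ in s..b, F (max s ζ) * θ' ζ = -(F s * θ s) + ∫ ζ in s..b, c ζ * θ ζ := by
    calc ∫ ζ in s..b, F (max s ζ) * θ' ζ = ∫ ζ in s..b, F ζ * θ' ζ :=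
          integral_congr fun ζ hζ => by
            rw [uIcc_of_le hsb] at hζ
            simp only [max_eq_right hζ.1]
      _ = F b * θ b - F s * θ s - ∫ ζ in s..b, -c ζ * θ ζ :=
          integral_mul_deriv_eq_deriv_mul_of_hasDerivAt (hF.mono hsub_right)
            (hθc.mono hsub_right)
            (fun x hx => by
              rw [min_eq_left hsb, max_eq_right hsb] at hx
              exact hasDerivAt_integral_left_of_mem_Ioo hc ⟨has.trans_lt hx.1, hx.2⟩)
            (fun x hx => by
              rw [min_eq_left hsb, max_eq_right hsb] at hx
              exact (hθ x ⟨has.trans hx.1.le, hx.2.le⟩).hasDerivAt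
                (Icc_mem_nhds (has.trans_lt hx.1) hx.2))
            (hc.mono hsub_right).intervalIntegrable.neg
            (hθ'.mono hsub_right).intervalIntegrable
      _ = -(F s * θ s) + ∫ ζ in s..b, c ζ * θ ζ := by
          simp only [hF_def, intervalIntegral.integral_same, zero_mul, neg_mul,
            intervalIntegral.integral_neg]
          ring
  rw [← integral_add_adjacent_intervals ((hkernel.mono hsub_left).intervalIntegrable)
    ((hkernel.mono hsub_right).intervalIntegrable), hleft, hright]
  ring

end

theorem stmt_4_general (γ : ℝ)
    (φ χ : ℝ → ℝ)
    (hφd : ∀ s ∈ Icc (0:ℝ) 1, HasDerivWithinAt φ (χ s) (Icc 0 1) s)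
    (θ₀ dθ : ℝ → ℝ) (hθ0 : θ₀ 0 = 0)
    (hθd : ∀ s ∈ Icc (0:ℝ) 1, HasDerivWithinAt θ₀ (dθ s) (Icc 0 1) s)
    (hdθd : ∀ s ∈ Icc (0:ℝ) 1,
      HasDerivWithinAt dθ (-(γ * Real.cos (φ s) * θ₀ s)) (Icc 0 1) s)
    (K : ℝ → ℝ → ℝ)
    (hK : ∀ s ζ, K s ζ = ∫ σ in max s ζ..1, Real.cos (φ σ)) :
    ∀ s ∈ Icc (0:ℝ) 1,
      -dθ s + dθ 1 + γ * ∫ ζ in (0:ℝ)..1, K s ζ * dθ ζ = 0 := by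
  intro s hs
  have hφc : ContinuousOn φ (Icc 0 1) := fun x hx => (hφd x hx).continuousWithinAt
  have hθc : ContinuousOn θ₀ (Icc 0 1) := fun x hx => (hθd x hx).continuousWithinAt
  have hdθc : ContinuousOn dθ (Icc 0 1) := fun x hx => (hdθd x hx).continuousWithinAt
  have hcos : ContinuousOn (fun σ => Real.cos (φ σ)) (Icc 0 1) := by fun_prop
  have hkernel : ∫ ζ in (0:ℝ)..1, K s ζ * dθ ζ = ∫ ζ in s..1, Real.cos (φ ζ) * θ₀ ζ := by
    simp only [hK]
    exact integral_integral_max_mul_deriv hcos hθd hdθc hθ0 hs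
  have hequation : ∫ ζ in s..1, -(γ * Real.cos (φ ζ) * θ₀ ζ) = dθ 1 - dθ s :=
    integral_eq_sub_of_hasDerivWithinAt_Icc hs.2
      (forall_hasDerivWithinAt_Icc_mono hs.1 le_rfl hdθd)
      (ContinuousOn.intervalIntegrable_of_Icc hs.2 <|
        (by fun_prop : ContinuousOn (fun ζ => -(γ * Real.cos (φ ζ) * θ₀ ζ)) (Icc 0 1)).mono
        (Icc_subset_Icc hs.1 le_rfl))
  simp only [intervalIntegral.integral_neg, mul_assoc, intervalIntegral.integral_const_mul]
    at hequation
  rw [hkernel]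
  linarith

/-- if `φ` solves the pendulum equation `φ'' + γ sin φ = 0`, `φ(0) = 0`,
and `θ₀` solves the linearized equation `θ'' + γ cos(φ) θ = 0`, `θ(0) = 0`, `θ'(0) = 1`,
then `(θ₀', θ₀'(1))` lies in the kernel of the linearized operator, i.e.
`−θ₀'(s) + θ₀'(1) + γ ∫_0^1 K(s,ζ) θ₀'(ζ) dζ = 0` with
`K(s,ζ) = ∫_{max(s,ζ)}^1 cos(φ(σ)) dσ`. -/
theorem stmt_4 (γ : ℝ) (hγ : 0 < γ)
    (φ χ : ℝ → ℝ) (hφ0 : φ 0 = 0)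
    (hφd : ∀ s ∈ Icc (0:ℝ) 1, HasDerivWithinAt φ (χ s) (Icc 0 1) s)
    (hχd : ∀ s ∈ Icc (0:ℝ) 1, HasDerivWithinAt χ (-(γ * Real.sin (φ s))) (Icc 0 1) s)
    (θ₀ dθ : ℝ → ℝ) (hθ0 : θ₀ 0 = 0) (hdθ0 : dθ 0 = 1)
    (hθd : ∀ s ∈ Icc (0:ℝ) 1, HasDerivWithinAt θ₀ (dθ s) (Icc 0 1) s)
    (hdθd : ∀ s ∈ Icc (0:ℝ) 1,
      HasDerivWithinAt dθ (-(γ * Real.cos (φ s) * θ₀ s)) (Icc 0 1) s)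
    (K : ℝ → ℝ → ℝ)
    (hK : ∀ s ζ, K s ζ = ∫ σ in max s ζ..1, Real.cos (φ σ)) :
    ∀ s ∈ Icc (0:ℝ) 1,
      -dθ s + dθ 1 + γ * ∫ ζ in (0:ℝ)..1, K s ζ * dθ ζ = 0 :=
  stmt_4_general γ φ χ hφd θ₀ dθ hθ0 hθd hdθd K hK
end

section
/- Let φ ∈ C([0,1]), γ > 0, and define the bounded operator ℒ on L²(0,1) × ℝ by ℒ(ξ, ξ°) = (s ↦ ξ° − ξ(s) + γ ∫_0^1 K(s,ζ) ξ(ζ) dζ, 0), with K(s,ζ) = ∫_{max(s,ζ)}^1 cos(φ(σ)) dσ. Then for every λ ∈ ℂ \ {0}: λ belongs to the spectrum of ℒ if and only if 1 + λ belongs to the spectrum of γ𝒦 on L²(0,1), where 𝒦 is the integral operator with kernel K. In particular σ(ℒ) ⊂ ℝ is countable, −1 ∈ σ(ℒ), and −1 is the only possible accumulation point of σ(ℒ). -/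
/-!
For `λ ≠ 0` the operator `λ - ℒ` is upper triangular on `L²(0,1) × ℝ`, with diagonal entries
`λ - (γ𝒦 - 1)` and the invertible scalar `λ`; so it is bijective exactly when `λ - (γ𝒦 - 1)`
is, and by the open mapping theorem bijectivity is invertibility.

The kernel `K(s,ζ) = F(max s ζ)`, with `F a = ∫_a^1 cos φ`, is continuous, symmetric, bounded
by `1` on the square and `1`-Lipschitz in `s`. Hence `𝒦` sends the unit ball of `L²` into
`1`-Lipschitz functions bounded by `1`, a compact set by Arzelà–Ascoli, and Fubini makes `𝒦`
symmetric. Nonzero spectral values of a compact operator are eigenvalues; for a symmetric one,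
unit eigenvectors of distinct eigenvalues of modulus `≥ ε` are orthogonal, so their images are
`ε`-separated, and compactness leaves only finitely many of them. Shifted by `-1`, this gives
countability of `σ(ℒ)` and `-1` as its only possible accumulation point. Finally
`0 ∈ σ(γ𝒦)`: every element of its range has a continuous representative, so the indicator of
`(-∞, 1/2]` is not attained.
-/

open MeasureTheory Set Filter

/-- The measure of the interval `[0,1]`, underlying the space `L²(0,1)`. -/
noncomputable def μ01 : Measure ℝ := volume.restrict (Icc (0:ℝ) 1)

open Topology
open scoped RealInnerProductSpace BoundedContinuousFunction

theorem mem_spectrum_iff_of_apply_eq_prod {𝕜 E : Type*} [NontriviallyNormedField 𝕜]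
    [CompleteSpace 𝕜] [NormedAddCommGroup E] [NormedSpace 𝕜 E] [CompleteSpace E]
    {L : E × 𝕜 →L[𝕜] E × 𝕜} {T : E →L[𝕜] E} {e : E}
    (hL : ∀ v, L v = (T v.1 + v.2 • e, 0)) {lam : 𝕜} (hlam : lam ≠ 0) :
    lam ∈ spectrum 𝕜 L ↔ lam ∈ spectrum 𝕜 T := by
  have hsub : ∀ v : E × 𝕜, (algebraMap 𝕜 _ lam - L) v =
      ((algebraMap 𝕜 (E →L[𝕜] E) lam - T) v.1 - v.2 • e, lam * v.2) := by
    intro v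
    ext <;> simp [hL, Algebra.algebraMap_eq_smul_one, sub_sub]
  rw [spectrum.mem_iff, spectrum.mem_iff, not_iff_not, ContinuousLinearMap.isUnit_iff_bijective,
    ContinuousLinearMap.isUnit_iff_bijective]
  generalize algebraMap 𝕜 (E →L[𝕜] E) lam - T = S at hsub ⊢
  constructor
  · rintro ⟨hinj, hsurj⟩
    refine ⟨fun x y hxy => congrArg Prod.fst (@hinj (x, 0) (y, 0) (by simp [hsub, hxy])),
      fun f => ?_⟩
    obtain ⟨v, hv⟩ := hsurj (f, 0)
    rw [hsub, Prod.mk.injEq, mul_eq_zero, or_iff_right hlam] at hv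
    exact ⟨v.1, by simpa [hv.2] using hv.1⟩
  · rintro ⟨hinj, hsurj⟩
    refine ⟨fun v w hvw => ?_, fun p => ?_⟩
    · rw [hsub, hsub, Prod.mk.injEq] at hvw
      have h2 : v.2 = w.2 := mul_left_cancel₀ hlam hvw.2
      exact Prod.ext (hinj (by simpa [h2] using hvw.1)) h2
    · obtain ⟨x, hx⟩ := hsurj (p.1 + (lam⁻¹ * p.2) • e)
      exact ⟨(x, lam⁻¹ * p.2), by simp [hsub, hx, hlam]⟩

def FiniteAwayFrom (S : Set ℝ) (c : ℝ) : Prop :=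
  ∀ ε > 0, {t ∈ S | ε ≤ |t - c|}.Finite

namespace FiniteAwayFrom

variable {S T : Set ℝ} {c : ℝ}

theorem countable (h : FiniteAwayFrom S c) : S.Countable := by
  have hS : S ⊆ {c} ∪ ⋃ n : ℕ, {t ∈ S | 1 / (n + 1) ≤ |t - c|} := by
    intro t ht
    rcases eq_or_ne t c with rfl | htc
    · exact Or.inl rfl
    · obtain ⟨n, hn⟩ := exists_nat_one_div_lt (abs_pos.mpr (sub_ne_zero.mpr htc))
      exact Or.inr (mem_iUnion.mpr ⟨n, ht, hn.le⟩)
  exact ((countable_singleton c).union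
    (countable_iUnion fun n => (h _ Nat.one_div_pos_of_nat).countable)).mono hS

theorem eq_of_accPt (h : FiniteAwayFrom S c) {x : ℝ} (hx : AccPt x (𝓟 S)) : x = c := by
  by_contra hxc
  set ε := |x - c| / 2 with hε_def
  have hε : 0 < ε := half_pos (abs_pos.mpr (sub_ne_zero.mpr hxc))
  refine Set.Infinite.of_accPt (hx.nhds_inter (Metric.ball_mem_nhds x hε))
    ((h ε hε).subset fun t ⟨ht, htS⟩ => ⟨htS, ?_⟩)
  rw [Metric.mem_ball, Real.dist_eq] at ht
  linarith [abs_sub_le x t c, abs_sub_comm x t]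

theorem of_forall_add_mem (h : FiniteAwayFrom T c) {a d : ℝ} (hS : ∀ t ∈ S, t ≠ a → t + d ∈ T) :
    FiniteAwayFrom S (c - d) := by
  intro ε hε
  refine (((h ε hε).image (· - d)).insert a).subset fun t ⟨htS, ht⟩ => ?_
  rcases eq_or_ne t a with rfl | hta
  · exact mem_insert _ _
  · refine mem_insert_of_mem _ ⟨t + d, ⟨hS t htS hta, ?_⟩, add_sub_cancel_right t d⟩
    rwa [show t + d - c = t - (c - d) by ring]

end FiniteAwayFrom

theorem IsCompact.exists_ne_dist_lt {X : Type*} [PseudoMetricSpace X] {K : Set X}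
    (hK : IsCompact K) {x : ℕ → X} (hx : ∀ n, x n ∈ K) {ε : ℝ} (hε : 0 < ε) :
    ∃ m n, m ≠ n ∧ dist (x m) (x n) < ε := by
  obtain ⟨y, -, φ, hφ, hlim⟩ := hK.tendsto_subseq hx
  obtain ⟨N, hN⟩ := Metric.cauchySeq_iff'.mp hlim.cauchySeq ε hε
  exact ⟨φ (N + 1), φ N, hφ.injective.ne (by omega), hN (N + 1) (by omega)⟩

theorem IsCompactOperator.exists_norm_eq_one_apply_eq_smul {E : Type*} [NormedAddCommGroup E]
    [NormedSpace ℝ E] [CompleteSpace E] {A : E →L[ℝ] E} (hA : IsCompactOperator A) {t : ℝ}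
    (ht0 : t ≠ 0) (ht : t ∈ spectrum ℝ A) : ∃ v, ‖v‖ = 1 ∧ A v = t • v := by
  obtain ⟨v, hv⟩ := ((hA.hasEigenvalue_iff_mem_spectrum ht0).mpr ht).exists_hasEigenvector
  refine ⟨‖v‖⁻¹ • v, norm_smul_inv_norm hv.2, ?_⟩
  rw [map_smul, show A v = t • v from hv.apply_eq_smul, smul_comm]

section CompactSymmetric

variable {H : Type*} [NormedAddCommGroup H] [InnerProductSpace ℝ H] {A : H →L[ℝ] H}

theorem LinearMap.IsSymmetric.abs_eigenvalue_le_norm_apply_sub_apply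
    (hA : (A : H →ₗ[ℝ] H).IsSymmetric) {x y : H} (hx1 : ‖x‖ = 1) (hy1 : ‖y‖ = 1) {a b : ℝ}
    (hx : A x = a • x) (hy : A y = b • y) (hab : a ≠ b) : |a| ≤ ‖A x - A y‖ := by
  have hxy : ⟪x, y⟫ = 0 := hA.orthogonalFamily_eigenspaces hab
    ⟨x, Module.End.mem_eigenspace_iff.mpr hx⟩ ⟨y, Module.End.mem_eigenspace_iff.mpr hy⟩
  have hpyth := norm_sub_sq_eq_norm_sq_add_norm_sq_real
    (x := a • x) (y := b • y) (by rw [real_inner_smul_left, real_inner_smul_right, hxy]; ring)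
  rw [norm_smul, norm_smul, hx1, hy1, Real.norm_eq_abs, Real.norm_eq_abs] at hpyth
  rw [hx, hy]
  nlinarith [norm_nonneg (a • x - b • y), abs_nonneg a, abs_nonneg b]

variable [CompleteSpace H]

theorem IsCompactOperator.finiteAwayFrom_spectrum (hA : IsCompactOperator A)
    (hsym : (A : H →ₗ[ℝ] H).IsSymmetric) : FiniteAwayFrom (spectrum ℝ A) 0 := by
  intro ε hε
  by_contra hinf
  let t : ℕ → ℝ := fun n => Set.Infinite.natEmbedding _ hinf n
  have ht_inj : Function.Injective t := fun m n h =>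
    (Set.Infinite.natEmbedding _ hinf).injective (Subtype.ext h)
  have ht n : t n ∈ spectrum ℝ A ∧ ε ≤ |t n| := by
    simpa using (Set.Infinite.natEmbedding _ hinf n).2
  have ht0 n : t n ≠ 0 := fun h => by simpa [h, hε.not_ge] using (ht n).2
  choose v hv1 hvA using fun n => hA.exists_norm_eq_one_apply_eq_smul (ht0 n) (ht n).1
  obtain ⟨K, hK, hAK⟩ := hA.image_closedBall_subset_compact 1
  obtain ⟨m, n, hmn, hlt⟩ :=
    hK.exists_ne_dist_lt (fun n => hAK ⟨v n, by simp [hv1], rfl⟩) hε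
  have hsep := hsym.abs_eigenvalue_le_norm_apply_sub_apply (hv1 m) (hv1 n) (hvA m) (hvA n)
    (ht_inj.ne hmn)
  rw [dist_eq_norm, ContinuousLinearMap.coe_coe] at hlt
  linarith [(ht m).2]

end CompactSymmetric

theorem integral_abs_le_norm {α : Type*} [MeasurableSpace α] {μ : Measure α}
    [IsProbabilityMeasure μ] (u : Lp ℝ 2 μ) : ∫ x, |u x| ∂μ ≤ ‖u‖ :=
  calc ∫ x, |u x| ∂μ = (eLpNorm u 1 μ).toReal := by
        simp_rw [← Real.norm_eq_abs]
        rw [integral_norm_eq_lintegral_enorm (Lp.aestronglyMeasurable u),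
          eLpNorm_one_eq_lintegral_enorm]
    _ ≤ (eLpNorm u 2 μ).toReal := ENNReal.toReal_mono (Lp.eLpNorm_ne_top u)
        (eLpNorm_le_eLpNorm_of_exponent_le one_le_two (Lp.aestronglyMeasurable u))
    _ = ‖u‖ := (Lp.norm_def u).symm

theorem abs_integral_mul_le {α : Type*} [MeasurableSpace α] {μ : Measure α}
    [IsProbabilityMeasure μ] {g : α → ℝ} {C : ℝ} (hgC : ∀ᵐ x ∂μ, |g x| ≤ C) (u : Lp ℝ 2 μ) :
    |∫ x, g x * u x ∂μ| ≤ C * ‖u‖ := by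
  have hC : 0 ≤ C := hgC.exists.elim fun x hx => (abs_nonneg _).trans hx
  have hu : Integrable (fun x => |u x|) μ := ((Lp.memLp u).integrable one_le_two).abs
  rw [← Real.norm_eq_abs]
  calc ‖∫ x, g x * u x ∂μ‖ ≤ ∫ x, C * |u x| ∂μ := by
        refine norm_integral_le_of_norm_le (hu.const_mul C) ?_
        filter_upwards [hgC] with x hx
        rw [norm_mul, Real.norm_eq_abs, Real.norm_eq_abs]
        exact mul_le_mul_of_nonneg_right hx (abs_nonneg _)
    _ = C * ∫ x, |u x| ∂μ := integral_const_mul C _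
    _ ≤ C * ‖u‖ := mul_le_mul_of_nonneg_left (integral_abs_le_norm u) hC

theorem Continuous.eqOn_Icc_of_ae_eq_const {f : ℝ → ℝ} (hf : Continuous f) {a b c : ℝ}
    (hab : a < b) (h : ∀ᵐ x ∂volume.restrict (Ioo a b), f x = c) : EqOn f (fun _ => c) (Icc a b) :=
  (Measure.eqOn_open_of_ae_eq h isOpen_Ioo hf.continuousOn continuousOn_const).of_subset_closure
    hf.continuousOn continuousOn_const Ioo_subset_Icc_self (closure_Ioo hab.ne).ge

instance : IsProbabilityMeasure μ01 :=
  ⟨by rw [μ01, Measure.restrict_apply_univ, Real.volume_Icc]; norm_num⟩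

theorem ae_mem_Icc_μ01 : ∀ᵐ x ∂μ01, x ∈ Icc (0:ℝ) 1 :=
  ae_restrict_mem measurableSet_Icc

theorem intervalIntegral_eq_integral_μ01 (f : ℝ → ℝ) :
    ∫ x in (0:ℝ)..1, f x = ∫ x, f x ∂μ01 := by
  rw [intervalIntegral.integral_of_le zero_le_one, μ01, integral_Icc_eq_integral_Ioc]

theorem μ01_restrict_of_subset {s : Set ℝ} (hs : MeasurableSet s) (hs01 : s ⊆ Icc 0 1) :
    μ01.restrict s = volume.restrict s := by
  rw [μ01, Measure.restrict_restrict hs, inter_eq_self_of_subset_left hs01]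

theorem zero_mem_spectrum_of_ae_eq_continuous (T : Lp ℝ 2 μ01 →L[ℝ] Lp ℝ 2 μ01)
    (hT : ∀ u, ∃ f : ℝ → ℝ, Continuous f ∧ T u =ᵐ[μ01] f) : (0:ℝ) ∈ spectrum ℝ T := by
  rw [spectrum.mem_iff, map_zero, zero_sub, IsUnit.neg_iff,
    ContinuousLinearMap.isUnit_iff_bijective]
  intro hT_bij
  obtain ⟨u, hu⟩ := hT_bij.2
    (indicatorConstLp 2 (measurableSet_Iic (a := 2⁻¹)) (measure_ne_top μ01 _) (1:ℝ))
  obtain ⟨f, hf, hTu⟩ := hT u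
  have hae : ∀ᵐ x ∂μ01, (Iic 2⁻¹).indicator (fun _ => (1:ℝ)) x = f x := by
    rw [hu] at hTu
    exact indicatorConstLp_coeFn.symm.trans hTu
  have hf_eq {a b c : ℝ} (ha : 0 ≤ a) (hab : a < b) (hb : b ≤ 1)
      (hc : ∀ x ∈ Ioo a b, (Iic 2⁻¹).indicator (fun _ => (1:ℝ)) x = c) :
      EqOn f (fun _ => c) (Icc a b) := by
    refine hf.eqOn_Icc_of_ae_eq_const hab ?_
    rw [← μ01_restrict_of_subset measurableSet_Ioo
      (Ioo_subset_Icc_self.trans (Icc_subset_Icc ha hb))]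
    filter_upwards [ae_restrict_of_ae hae, ae_restrict_mem measurableSet_Ioo] with x hx hmem
    rw [← hx, hc x hmem]
  have h_left : f 2⁻¹ = 1 := hf_eq le_rfl (by norm_num) (by norm_num)
    (fun x hx => indicator_of_mem (mem_Iic.mpr hx.2.le) _) ⟨by norm_num, le_rfl⟩
  have h_right : f 2⁻¹ = 0 := hf_eq (by norm_num) (by norm_num) le_rfl
    (fun x hx => indicator_of_notMem (notMem_Iic.mpr hx.1) _) ⟨le_rfl, by norm_num⟩
  exact one_ne_zero (h_left.symm.trans h_right)

def HasLipschitzRepr (T : Lp ℝ 2 μ01 →L[ℝ] Lp ℝ 2 μ01) : Prop :=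
  ∀ u, ∃ f : Icc (0:ℝ) 1 →ᵇ ℝ, LipschitzWith ‖u‖₊ f ∧ (∀ x, |f x| ≤ ‖u‖) ∧
    T u = BoundedContinuousFunction.toLp 2 μ01 ℝ (f.compContinuous ContinuousMap.projIccCM)

namespace HasLipschitzRepr

variable {T : Lp ℝ 2 μ01 →L[ℝ] Lp ℝ 2 μ01}

theorem isCompactOperator (hT : HasLipschitzRepr T) : IsCompactOperator T := by
  let A : Set (Icc (0:ℝ) 1 →ᵇ ℝ) := {f | LipschitzWith 1 f ∧ ∀ x, f x ∈ Icc (-1) 1}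
  have hA : IsCompact (closure A) :=
    BoundedContinuousFunction.arzela_ascoli (Icc (-1) 1) isCompact_Icc A (fun f x hf => hf.2 x)
      (LipschitzWith.uniformEquicontinuous _ 1 fun f => f.2.1).equicontinuous
  have hΦ : Continuous fun f : Icc (0:ℝ) 1 →ᵇ ℝ =>
      BoundedContinuousFunction.toLp 2 μ01 ℝ (f.compContinuous ContinuousMap.projIccCM) :=
    (BoundedContinuousFunction.toLp 2 μ01 ℝ).continuous.comp
      (BoundedContinuousFunction.continuous_compContinuous _)
  refine ⟨_, hA.image hΦ, ?_⟩
  filter_upwards [Metric.closedBall_mem_nhds (0 : Lp ℝ 2 μ01) one_pos] with u hu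
  obtain ⟨f, hf_lip, hf_bdd, hTu⟩ := hT u
  have hu1 : ‖u‖ ≤ 1 := by simpa using hu
  exact ⟨f, subset_closure ⟨hf_lip.weaken (by exact_mod_cast hu1),
    fun x => abs_le.mp ((hf_bdd x).trans hu1)⟩, hTu.symm⟩

theorem zero_mem_spectrum_smul (hT : HasLipschitzRepr T) (γ : ℝ) :
    (0:ℝ) ∈ spectrum ℝ (γ • T) := by
  refine zero_mem_spectrum_of_ae_eq_continuous _ fun u => ?_
  obtain ⟨f, -, -, hf⟩ := hT (γ • u)
  refine ⟨_, (f.compContinuous ContinuousMap.projIccCM).continuous, ?_⟩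
  rw [_root_.smul_apply, ← map_smul, hf]
  exact BoundedContinuousFunction.coeFn_toLp 2 μ01 ℝ _

end HasLipschitzRepr

def HasKernel (T : Lp ℝ 2 μ01 →L[ℝ] Lp ℝ 2 μ01) (K : ℝ → ℝ → ℝ) : Prop :=
  ∀ u, T u =ᵐ[μ01] fun s => ∫ ζ, K s ζ * u ζ ∂μ01

namespace HasKernel

variable {T : Lp ℝ 2 μ01 →L[ℝ] Lp ℝ 2 μ01} {K : ℝ → ℝ → ℝ}

theorem hasLipschitzRepr (h : HasKernel T K) (hKc : Continuous (Function.uncurry K))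
    (hKb : ∀ s ∈ Icc (0:ℝ) 1, ∀ ζ ∈ Icc (0:ℝ) 1, |K s ζ| ≤ 1)
    (hKl : ∀ ζ, LipschitzWith 1 (K · ζ)) : HasLipschitzRepr T := by
  intro u
  have hint {s : ℝ} (hs : s ∈ Icc (0:ℝ) 1) : Integrable (fun ζ => K s ζ * u ζ) μ01 :=
    ((Lp.memLp u).integrable one_le_two).bdd_mul (hKc.uncurry_left s).aestronglyMeasurable
      (by filter_upwards [ae_mem_Icc_μ01] with ζ hζ
          exact (Real.norm_eq_abs _).trans_le (hKb s hs ζ hζ))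
  let F : Icc (0:ℝ) 1 → ℝ := fun x => ∫ ζ, K x ζ * u ζ ∂μ01
  have hF_lip : LipschitzWith ‖u‖₊ F := LipschitzWith.of_dist_le_mul fun x y => by
    rw [Real.dist_eq, ← integral_sub (hint x.2) (hint y.2), coe_nnnorm, mul_comm,
      Subtype.dist_eq, Real.dist_eq]
    simp_rw [← sub_mul]
    refine abs_integral_mul_le (Eventually.of_forall fun ζ => ?_) u
    simpa [Real.dist_eq] using (hKl ζ).dist_le_mul x y
  refine ⟨BoundedContinuousFunction.mkOfCompact ⟨F, hF_lip.continuous⟩, hF_lip, fun x => ?_, ?_⟩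
  · simpa [F] using abs_integral_mul_le (C := 1)
      (by filter_upwards [ae_mem_Icc_μ01] with ζ hζ using hKb x x.2 ζ hζ) u
  · refine Lp.ext ((h u).trans (EventuallyEq.trans ?_
      (BoundedContinuousFunction.coeFn_toLp 2 μ01 ℝ _).symm))
    filter_upwards [ae_mem_Icc_μ01] with s hs
    simp [F, ContinuousMap.projIccCM, projIcc_of_mem _ hs]

theorem isSymmetric (h : HasKernel T K) (hKc : Continuous (Function.uncurry K))
    (hKb : ∀ s ∈ Icc (0:ℝ) 1, ∀ ζ ∈ Icc (0:ℝ) 1, |K s ζ| ≤ 1) (hKs : ∀ s ζ, K s ζ = K ζ s) :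
    (T : Lp ℝ 2 μ01 →ₗ[ℝ] Lp ℝ 2 μ01).IsSymmetric := by
  have hint (u v : Lp ℝ 2 μ01) :
      Integrable (fun z : ℝ × ℝ => K z.1 z.2 * u z.2 * v z.1) (μ01.prod μ01) := by
    refine Integrable.mono' (((Lp.memLp v).integrable one_le_two).norm.mul_prod
      ((Lp.memLp u).integrable one_le_two).norm) ?_ ?_
    · exact (hKc.aestronglyMeasurable.mul (Lp.aestronglyMeasurable u).comp_snd).mul
        (Lp.aestronglyMeasurable v).comp_fst
    · filter_upwards [Measure.quasiMeasurePreserving_fst.ae ae_mem_Icc_μ01,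
        Measure.quasiMeasurePreserving_snd.ae ae_mem_Icc_μ01] with z hz1 hz2
      rw [norm_mul, norm_mul, Real.norm_eq_abs (K _ _), mul_comm ‖v z.1‖, mul_assoc]
      exact mul_le_of_le_one_left (by positivity) (hKb _ hz1 _ hz2)
  have hinner (u v : Lp ℝ 2 μ01) :
      ⟪T u, v⟫ = ∫ z, K z.1 z.2 * u z.2 * v z.1 ∂μ01.prod μ01 := by
    rw [integral_prod _ (hint u v), L2.inner_def]
    refine integral_congr_ae ?_
    filter_upwards [h u] with x hx
    simp only [RCLike.inner_apply, conj_trivial, hx, integral_mul_const, mul_comm (v x)]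
  intro u v
  change ⟪T u, v⟫ = ⟪u, T v⟫
  rw [real_inner_comm (T v), hinner, hinner, ← integral_prod_swap]
  simp only [Prod.fst_swap, Prod.snd_swap, hKs]
  congr 1
  funext z
  ring

end HasKernel

theorem lipschitzWith_one_integral_Icc_one {g : ℝ → ℝ} (hg : Continuous g)
    (hg1 : ∀ x, |g x| ≤ 1) : LipschitzWith 1 fun a => ∫ σ in a..1, g σ := by
  refine LipschitzWith.of_dist_le_mul fun a b => ?_
  rw [Real.dist_eq, intervalIntegral.integral_interval_sub_interval_comm
    (hg.intervalIntegrable _ _) (hg.intervalIntegrable _ _) (hg.intervalIntegrable _ _),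
    intervalIntegral.integral_same, sub_zero, NNReal.coe_one, one_mul, Real.dist_eq,
    abs_sub_comm, ← Real.norm_eq_abs]
  simpa using intervalIntegral.norm_integral_le_of_norm_le_const (a := a) (b := b)
    fun x _ => (Real.norm_eq_abs _).trans_le (hg1 x)

theorem abs_integral_Icc_one_le {g : ℝ → ℝ} (hg1 : ∀ x, |g x| ≤ 1) {a : ℝ}
    (ha : a ∈ Icc (0:ℝ) 1) : |∫ σ in a..1, g σ| ≤ 1 := by
  rw [← Real.norm_eq_abs]
  refine (intervalIntegral.norm_integral_le_of_norm_le_const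
    fun x _ => (Real.norm_eq_abs _).trans_le (hg1 x)).trans ?_
  rw [one_mul, abs_of_nonneg (by linarith [ha.2])]
  linarith [ha.1]

section IntegralFromMax

variable {g : ℝ → ℝ} {K : ℝ → ℝ → ℝ}

theorem continuous_uncurry_of_eq_integral_max (hg : Continuous g) (hg1 : ∀ x, |g x| ≤ 1)
    (hK : ∀ s ζ, K s ζ = ∫ σ in max s ζ..1, g σ) : Continuous (Function.uncurry K) := by
  rw [show Function.uncurry K = (fun a => ∫ σ in a..1, g σ) ∘ fun p => max p.1 p.2 from
    funext fun p => hK p.1 p.2]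
  exact (lipschitzWith_one_integral_Icc_one hg hg1).continuous.comp
    (continuous_fst.max continuous_snd)

theorem lipschitzWith_one_of_eq_integral_max (hg : Continuous g) (hg1 : ∀ x, |g x| ≤ 1)
    (hK : ∀ s ζ, K s ζ = ∫ σ in max s ζ..1, g σ) (ζ : ℝ) : LipschitzWith 1 (K · ζ) := by
  rw [show (K · ζ) = (fun a => ∫ σ in a..1, g σ) ∘ (max · ζ) from funext fun s => hK s ζ,
    ← one_mul (1 : NNReal)]
  exact (lipschitzWith_one_integral_Icc_one hg hg1).comp (LipschitzWith.id.max_const ζ)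

theorem abs_le_one_of_eq_integral_max (hg1 : ∀ x, |g x| ≤ 1)
    (hK : ∀ s ζ, K s ζ = ∫ σ in max s ζ..1, g σ) :
    ∀ s ∈ Icc (0:ℝ) 1, ∀ ζ ∈ Icc (0:ℝ) 1, |K s ζ| ≤ 1 := fun s hs ζ hζ =>
  (hK s ζ).symm ▸ abs_integral_Icc_one_le hg1 ⟨le_max_of_le_left hs.1, max_le hs.2 hζ.2⟩

end IntegralFromMax

theorem apply_eq_prod_of_ae_eq {γ : ℝ} {𝒦 : Lp ℝ 2 μ01 →L[ℝ] Lp ℝ 2 μ01}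
    {L : (Lp ℝ 2 μ01 × ℝ) →L[ℝ] (Lp ℝ 2 μ01 × ℝ)}
    (hL1 : ∀ v : Lp ℝ 2 μ01 × ℝ, ⇑((L v).1) =ᵐ[μ01] fun s => v.2 - v.1 s + γ * (𝒦 v.1) s)
    (hL2 : ∀ v : Lp ℝ 2 μ01 × ℝ, (L v).2 = 0) (v : Lp ℝ 2 μ01 × ℝ) :
    L v = ((-1 + γ • 𝒦) v.1 + v.2 • Lp.const 2 μ01 (1:ℝ), 0) := by
  have hv : (-1 + γ • 𝒦) v.1 + v.2 • Lp.const 2 μ01 (1:ℝ) =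
      -v.1 + γ • 𝒦 v.1 + v.2 • Lp.const 2 μ01 (1:ℝ) := rfl
  refine Prod.ext (Lp.ext ((hL1 v).trans ?_)) (hL2 v)
  rw [hv]
  filter_upwards [Lp.coeFn_add (-v.1 + γ • 𝒦 v.1) (v.2 • Lp.const 2 μ01 (1:ℝ)),
    Lp.coeFn_add (-v.1) (γ • 𝒦 v.1), Lp.coeFn_neg v.1, Lp.coeFn_smul γ (𝒦 v.1),
    Lp.coeFn_smul v.2 (Lp.const 2 μ01 (1:ℝ)), Lp.coeFn_const 2 μ01 (1:ℝ)]
    with s h1 h2 h3 h4 h5 h6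
  simp only [h1, Pi.add_apply, h2, h3, Pi.neg_apply, h4, h5, Pi.smul_apply, h6, smul_eq_mul,
    Function.const_apply]
  ring

theorem stmt_5_general (φ : ℝ → ℝ) (hφ : Continuous φ) (γ : ℝ)
    (K : ℝ → ℝ → ℝ)
    (hK : ∀ s ζ, K s ζ = ∫ σ in max s ζ..1, Real.cos (φ σ))
    (𝒦 : Lp ℝ 2 μ01 →L[ℝ] Lp ℝ 2 μ01)
    (h𝒦 : ∀ u : Lp ℝ 2 μ01, ⇑(𝒦 u) =ᵐ[μ01] fun s => ∫ ζ in (0:ℝ)..1, K s ζ * u ζ)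
    (L : (Lp ℝ 2 μ01 × ℝ) →L[ℝ] (Lp ℝ 2 μ01 × ℝ))
    (hL1 : ∀ v : Lp ℝ 2 μ01 × ℝ,
      ⇑((L v).1) =ᵐ[μ01] fun s => v.2 - v.1 s + γ * (𝒦 v.1) s)
    (hL2 : ∀ v : Lp ℝ 2 μ01 × ℝ, (L v).2 = 0) :
    (∀ lam : ℝ, lam ≠ 0 →
      (lam ∈ spectrum ℝ L ↔ 1 + lam ∈ spectrum ℝ (γ • 𝒦))) ∧
    (spectrum ℝ L).Countable ∧
    (-1 : ℝ) ∈ spectrum ℝ L ∧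
    (∀ x : ℝ, AccPt x (𝓟 (spectrum ℝ L)) → x = -1) := by
  have hg := Real.continuous_cos.comp hφ
  have hg1 (x : ℝ) : |Real.cos (φ x)| ≤ 1 := Real.abs_cos_le_one _
  have hKc := continuous_uncurry_of_eq_integral_max hg hg1 hK
  have hKb := abs_le_one_of_eq_integral_max hg1 hK
  have h𝒦K : HasKernel 𝒦 K := fun u => by
    simpa only [intervalIntegral_eq_integral_μ01] using h𝒦 u
  have hrepr := h𝒦K.hasLipschitzRepr hKc hKb (lipschitzWith_one_of_eq_integral_max hg hg1 hK)
  have hsymm := (h𝒦K.isSymmetric hKc hKb fun s ζ => by rw [hK, hK, max_comm]).smul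
    (conj_trivial γ)
  have hspec (lam : ℝ) (hlam : lam ≠ 0) :
      lam ∈ spectrum ℝ L ↔ 1 + lam ∈ spectrum ℝ (γ • 𝒦) := by
    rw [mem_spectrum_iff_of_apply_eq_prod (apply_eq_prod_of_ae_eq hL1 hL2) hlam, add_comm 1 lam,
      spectrum.add_mem_iff, map_one]
  have hfin : FiniteAwayFrom (spectrum ℝ L) (-1) := by
    simpa using ((hrepr.isCompactOperator.smul γ).finiteAwayFrom_spectrum hsymm).of_forall_add_mem
      (a := 0) (d := 1) fun t ht ht0 => add_comm 1 t ▸ (hspec t ht0).1 ht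
  refine ⟨hspec, hfin.countable, (hspec (-1) (by norm_num)).2 ?_, fun x => hfin.eq_of_accPt⟩
  simpa using hrepr.zero_mem_spectrum_smul γ

/-- for the linearization `ℒ(ξ, ξ°) = (ξ° − ξ + γ𝒦ξ, 0)` on `L²(0,1) × ℝ`,
a nonzero `λ` lies in `σ(ℒ)` iff `1 + λ ∈ σ(γ𝒦)`; moreover `σ(ℒ)` is countable,
contains `−1`, and `−1` is its only possible accumulation point. -/
theorem stmt_5 (φ : ℝ → ℝ) (hφ : Continuous φ) (γ : ℝ) (hγ : 0 < γ)
    (K : ℝ → ℝ → ℝ)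
    (hK : ∀ s ζ, K s ζ = ∫ σ in max s ζ..1, Real.cos (φ σ))
    (𝒦 : Lp ℝ 2 μ01 →L[ℝ] Lp ℝ 2 μ01)
    (h𝒦 : ∀ u : Lp ℝ 2 μ01, ⇑(𝒦 u) =ᵐ[μ01] fun s => ∫ ζ in (0:ℝ)..1, K s ζ * u ζ)
    (L : (Lp ℝ 2 μ01 × ℝ) →L[ℝ] (Lp ℝ 2 μ01 × ℝ))
    (hL1 : ∀ v : Lp ℝ 2 μ01 × ℝ,
      ⇑((L v).1) =ᵐ[μ01] fun s => v.2 - v.1 s + γ * (𝒦 v.1) s)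
    (hL2 : ∀ v : Lp ℝ 2 μ01 × ℝ, (L v).2 = 0) :
    (∀ lam : ℝ, lam ≠ 0 →
      (lam ∈ spectrum ℝ L ↔ 1 + lam ∈ spectrum ℝ (γ • 𝒦))) ∧
    (spectrum ℝ L).Countable ∧
    (-1 : ℝ) ∈ spectrum ℝ L ∧
    (∀ x : ℝ, AccPt x (𝓟 (spectrum ℝ L)) → x = -1) :=
  stmt_5_general φ hφ γ K hK 𝒦 h𝒦 L hL1 hL2
end

section
/- Let (μ, μ°) ∈ C¹([0,T); L²(0,1) × ℝ) solve the quasistatic Eulerian strut equations. Define V(t) = ½ ∫_0^1 (μ(s,t) − μ°(t))² ds + κ(μ°(t)) + γ ∫_0^1 cos θ(s,t) ds, where θ(s,t) = ∫_0^s μ(ζ,t) dζ. Then d/dt V(t) = −∫_0^1 μ_t(s,t)² ds − |D̂(μ(·,t), μ°(t))| |μ°_t(t)| ≤ 0 for all t; i.e., V is a Liapunov function. -/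
/-!
Differentiate each term of `V` under the integral sign. The bending term gives
`-γ ∫ sin θ · θₜ`, and integration by parts (with `θₜ(s) = ∫₀ˢ μₜ`) turns it into
`-γ ∫ μₜ(s) ∫ₛ¹ sin θ`. Eliminating `μ - μ°` from the elastic term by the evolution equation
produces the same term with the opposite sign, leaving `-∫ μₜ² - μ°ₜ D̂`. Finally, as `f` vanishes
on `(-∞, 0]` and `Θ > 0`, `μ°ₜ` has the sign of `D̂`, so `μ°ₜ D̂ = |D̂| |μ°ₜ|`.
-/

open MeasureTheory Set Function

theorem norm_sub_sub_smul_le_of_hasDerivWithinAt {E : Type*} [NormedAddCommGroup E]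
    [NormedSpace ℝ E] {S : Set ℝ} (hS : Convex ℝ S) {g g' : ℝ → E} {t τ ε : ℝ}
    (hg : ∀ u ∈ S, HasDerivWithinAt g (g' u) S u) (hg' : ∀ u ∈ S, ‖g' u - g' t‖ ≤ ε)
    (ht : t ∈ S) (hτ : τ ∈ S) :
    ‖g τ - g t - (τ - t) • g' t‖ ≤ ε * ‖τ - t‖ := by
  have hlin : ∀ u ∈ S, HasDerivWithinAt (fun u => g u - u • g' t) (g' u - g' t) S u :=
    fun u hu => ((hg u hu).sub ((hasDerivWithinAt_id u S).smul_const (g' t))).congr_deriv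
      (by rw [one_smul])
  have := hS.norm_image_sub_le_of_norm_hasDerivWithin_le hlin hg' ht hτ
  rwa [show g τ - τ • g' t - (g t - t • g' t) = g τ - g t - (τ - t) • g' t by
    rw [sub_smul]; abel] at this

theorem hasDerivWithinAt_intervalIntegral_of_continuousOn {I : Set ℝ} (hI : Convex ℝ I)
    {F F' : ℝ → ℝ → ℝ} {a b t : ℝ} (ht : t ∈ I)
    (hF : ContinuousOn (uncurry F) (I ×ˢ uIcc a b))
    (hF' : ContinuousOn (uncurry F') (I ×ˢ uIcc a b))
    (hderiv : ∀ u ∈ I, ∀ s ∈ uIcc a b, HasDerivWithinAt (F · s) (F' u s) I u) :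
    HasDerivWithinAt (fun u => ∫ s in a..b, F u s) (∫ s in a..b, F' t s) I t := by
  have hint : ∀ {G : ℝ → ℝ → ℝ}, ContinuousOn (uncurry G) (I ×ˢ uIcc a b) →
      ∀ u ∈ I, IntervalIntegrable (G u) volume a b := fun hG u hu =>
    (hG.comp (Continuous.prodMk_right u).continuousOn fun s hs => ⟨hu, hs⟩).intervalIntegrable
  -- `F' u → F' t` uniformly on the compact `[[a, b]]`, so the mean value inequality on each
  -- fibre gives a first-order expansion of `F` that is uniform in `s`.
  rw [hasDerivWithinAt_iff_isLittleO, Asymptotics.isLittleO_iff]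
  intro ε hε
  set ε' := ε / (|b - a| + 1)
  obtain ⟨v, hv, hvF'⟩ := isCompact_uIcc.mem_uniformity_of_prod hF' ht
    (Metric.dist_mem_uniformity (div_pos hε (by positivity) : 0 < ε'))
  obtain ⟨δ, hδ, hδv⟩ := Metric.mem_nhdsWithin_iff.1 hv
  have hS : Convex ℝ (I ∩ Metric.ball t δ) := hI.inter (convex_ball t δ)
  filter_upwards [inter_mem_nhdsWithin I (Metric.ball_mem_nhds t hδ)] with τ hτ
  have hpoint : ∀ s ∈ uIoc a b, ‖F τ s - F t s - (τ - t) • F' t s‖ ≤ ε' * ‖τ - t‖ :=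
    fun s hs => norm_sub_sub_smul_le_of_hasDerivWithinAt hS
      (fun u hu => (hderiv u hu.1 s (uIoc_subset_uIcc hs)).mono inter_subset_left)
      (fun u hu => by
        rw [← dist_eq_norm]
        exact (hvF' u (hδv ⟨hu.2, hu.1⟩) s (uIoc_subset_uIcc hs)).le)
      ⟨ht, Metric.mem_ball_self hδ⟩ hτ
  calc ‖(∫ s in a..b, F τ s) - (∫ s in a..b, F t s) - (τ - t) • ∫ s in a..b, F' t s‖
      = ‖∫ s in a..b, (F τ s - F t s - (τ - t) • F' t s)‖ := by
        rw [intervalIntegral.integral_sub, intervalIntegral.integral_sub,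
          intervalIntegral.integral_smul]
        exacts [hint hF τ hτ.1, hint hF t ht, (hint hF τ hτ.1).sub (hint hF t ht),
          (hint hF' t ht).smul (τ - t)]
    _ ≤ ε' * ‖τ - t‖ * |b - a| := intervalIntegral.norm_integral_le_of_norm_le_const hpoint
    _ ≤ ε * ‖τ - t‖ := by
        have : ε' * |b - a| ≤ ε := by
          rw [div_mul_eq_mul_div, div_le_iff₀ (by positivity)]
          nlinarith [abs_nonneg (b - a)]
        nlinarith [norm_nonneg (τ - t)]

theorem integral_mul_primitive_eq_integral_mul_integral {g h : ℝ → ℝ} (hg : Continuous g)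
    (hh : Continuous h) (a b : ℝ) :
    ∫ s in a..b, (∫ ζ in a..s, h ζ) * g s = ∫ s in a..b, h s * ∫ σ in s..b, g σ := by
  have hparts := intervalIntegral.integral_mul_deriv_eq_deriv_mul
    (u := fun s => ∫ ζ in a..s, h ζ) (v := fun s => ∫ σ in b..s, g σ)
    (fun s _ => hh.integral_hasStrictDerivAt a s |>.hasDerivAt)
    (fun s _ => hg.integral_hasStrictDerivAt b s |>.hasDerivAt)
    (hh.intervalIntegrable a b) (hg.intervalIntegrable a b)
  simp only [intervalIntegral.integral_same, zero_mul, mul_zero, sub_zero, zero_sub] at hparts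
  rw [hparts, ← intervalIntegral.integral_neg]
  congr 1 with s
  rw [intervalIntegral.integral_symm s b, neg_mul_eq_mul_neg, neg_neg]

theorem mul_sub_nonneg_of_vanishes_on_nonpos {f : ℝ → ℝ} (hf0 : ∀ x, 0 ≤ f x)
    (hfneg : ∀ x ≤ (0:ℝ), f x = 0) {c : ℝ} (hc : 0 ≤ c) (D : ℝ) :
    0 ≤ D * (f (D - c) - f (-c - D)) := by
  rcases le_total 0 D with hD | hD
  · rw [hfneg (-c - D) (by linarith), sub_zero]
    exact mul_nonneg hD (hf0 _)
  · rw [hfneg (D - c) (by linarith), zero_sub]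
    exact mul_nonneg_of_nonpos_of_nonpos hD (neg_nonpos.2 (hf0 _))

section Strut

variable {I : Set ℝ} {μ μt : ℝ → ℝ → ℝ} {a b t : ℝ}

theorem hasDerivWithinAt_intervalIntegral_sub_sq (hI : Convex ℝ I) (ht : t ∈ I)
    (hμ : Continuous (uncurry μ)) (hμt : Continuous (uncurry μt))
    (hder : ∀ u ∈ I, ∀ s ∈ uIcc a b, HasDerivWithinAt (μ · s) (μt u s) I u)
    {m m' : ℝ → ℝ} (hm : ∀ u ∈ I, HasDerivWithinAt m (m' u) I u) (hm' : ContinuousOn m' I) :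
    HasDerivWithinAt (fun τ => ∫ s in a..b, (μ τ s - m τ) ^ 2)
      (2 * (∫ s in a..b, (μ t s - m t) * μt t s) - 2 * m' t * ∫ s in a..b, (μ t s - m t))
      I t := by
  have hmc : ContinuousOn m I := fun u hu => (hm u hu).continuousWithinAt
  have hmI : ContinuousOn (fun p : ℝ × ℝ => m p.1) (I ×ˢ uIcc a b) :=
    hmc.comp continuousOn_fst fun p hp => hp.1
  have hm'I : ContinuousOn (fun p : ℝ × ℝ => m' p.1) (I ×ˢ uIcc a b) :=
    hm'.comp continuousOn_fst fun p hp => hp.1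
  have hderiv : HasDerivWithinAt (fun τ => ∫ s in a..b, (μ τ s - m τ) ^ 2)
      (∫ s in a..b, 2 * (μ t s - m t) * (μt t s - m' t)) I t :=
    hasDerivWithinAt_intervalIntegral_of_continuousOn hI ht
      (F := fun τ s => (μ τ s - m τ) ^ 2) (F' := fun τ s => 2 * (μ τ s - m τ) * (μt τ s - m' τ))
      ((hμ.continuousOn.sub hmI).pow 2)
      ((continuousOn_const.mul (hμ.continuousOn.sub hmI)).mul (hμt.continuousOn.sub hm'I))
      fun u hu s hs => (((hder u hu s hs).sub (hm u hu)).pow 2).congr_deriv (by simp)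
  have hdiff : Continuous fun s => μ t s - m t := (hμ.uncurry_left t).sub continuous_const
  convert hderiv using 1
  rw [← intervalIntegral.integral_const_mul, ← intervalIntegral.integral_const_mul,
    ← intervalIntegral.integral_sub]
  · congr 1 with s
    ring
  exacts [((hdiff.mul (hμt.uncurry_left t)).intervalIntegrable a b).const_mul 2,
    (hdiff.intervalIntegrable a b).const_mul _]

theorem hasDerivWithinAt_intervalIntegral_cos_primitive (hI : Convex ℝ I) (ht : t ∈ I)
    (hμ : Continuous (uncurry μ)) (hμt : Continuous (uncurry μt))
    (hder : ∀ u ∈ I, ∀ s ∈ uIcc a b, HasDerivWithinAt (μ · s) (μt u s) I u) :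
    HasDerivWithinAt (fun τ => ∫ s in a..b, Real.cos (∫ ζ in a..s, μ τ ζ))
      (-∫ s in a..b, μt t s * ∫ σ in s..b, Real.sin (∫ ζ in a..σ, μ t ζ)) I t := by
  have hθ : Continuous (uncurry fun τ s => ∫ ζ in a..s, μ τ ζ) :=
    intervalIntegral.continuous_parametric_primitive_of_continuous hμ
  have hθt : Continuous (uncurry fun τ s => ∫ ζ in a..s, μt τ ζ) :=
    intervalIntegral.continuous_parametric_primitive_of_continuous hμt
  have hθder : ∀ u ∈ I, ∀ s ∈ uIcc a b,
      HasDerivWithinAt (fun τ => ∫ ζ in a..s, μ τ ζ) (∫ ζ in a..s, μt u ζ) I u :=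
    fun u hu s hs => hasDerivWithinAt_intervalIntegral_of_continuousOn hI hu
      hμ.continuousOn hμt.continuousOn
      fun u' hu' σ hσ => hder u' hu' σ (uIcc_subset_uIcc_left hs hσ)
  have hderiv := hasDerivWithinAt_intervalIntegral_of_continuousOn hI ht
    (F := fun τ s => Real.cos (∫ ζ in a..s, μ τ ζ))
    (F' := fun τ s => -Real.sin (∫ ζ in a..s, μ τ ζ) * ∫ ζ in a..s, μt τ ζ)
    (Real.continuous_cos.comp hθ).continuousOn
    ((Real.continuous_sin.comp hθ).neg.mul hθt).continuousOn
    fun u hu s hs => (hθder u hu s hs).cos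
  convert hderiv using 1
  simp_rw [neg_mul, intervalIntegral.integral_neg, mul_comm (Real.sin _)]
  rw [← integral_mul_primitive_eq_integral_mul_integral
    (g := fun s => Real.sin (∫ ζ in a..s, μ t ζ)) (Real.continuous_sin.comp (hθ.uncurry_left t))
    (hμt.uncurry_left t)]

theorem integral_sub_mul_eq_sub_integral_sq {u v : ℝ → ℝ} (hu : Continuous u)
    (hv : Continuous v) {m γ : ℝ}
    (heq : ∀ s ∈ uIcc a b, v s = -u s + m + γ * ∫ σ in s..b, Real.sin (∫ ζ in a..σ, u ζ)) :
    ∫ s in a..b, (u s - m) * v s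
      = γ * (∫ s in a..b, v s * ∫ σ in s..b, Real.sin (∫ ζ in a..σ, u ζ))
        - ∫ s in a..b, v s ^ 2 := by
  have hB : ContinuousOn (fun s => ∫ σ in s..b, Real.sin (∫ ζ in a..σ, u ζ)) (uIcc a b) :=
    intervalIntegral.continuousOn_primitive_interval_left <| Continuous.integrableOn_uIcc <|
      Real.continuous_sin.comp <|
        intervalIntegral.continuous_primitive (fun _ _ => hu.intervalIntegrable _ _) a
  rw [← intervalIntegral.integral_const_mul, ← intervalIntegral.integral_sub]
  · refine intervalIntegral.integral_congr fun s hs => ?_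
    simp only [heq s hs]
    ring
  exacts [(hv.continuousOn.mul hB).intervalIntegrable.const_mul γ,
    (hv.pow 2).intervalIntegrable a b]

end Strut

theorem stmt_9_general (f Θ κ : ℝ → ℝ) (γ T : ℝ)
    (hf0 : ∀ x, 0 ≤ f x) (hfneg : ∀ x ≤ (0:ℝ), f x = 0)
    (hΘ : ∀ x, 0 < Θ x) (hκ : ContDiff ℝ 1 κ)
    (μ μt : ℝ → ℝ → ℝ) (m mt : ℝ → ℝ)
    (hμc : Continuous fun p : ℝ × ℝ => μ p.1 p.2)
    (hμtc : Continuous fun p : ℝ × ℝ => μt p.1 p.2)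
    (hmtc : Continuous mt)
    (hder : ∀ t ∈ Ico (0:ℝ) T, ∀ s ∈ Icc (0:ℝ) 1,
      HasDerivWithinAt (fun τ => μ τ s) (μt t s) (Ico 0 T) t)
    (hmder : ∀ t ∈ Ico (0:ℝ) T, HasDerivWithinAt m (mt t) (Ico 0 T) t)
    (heq : ∀ t ∈ Ico (0:ℝ) T, ∀ s ∈ Icc (0:ℝ) 1,
      μt t s = -(μ t s) + m t + γ * ∫ σ in s..1, Real.sin (∫ ζ in (0:ℝ)..σ, μ t ζ))
    (hmeq : ∀ t ∈ Ico (0:ℝ) T,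
      mt t = f (((∫ s in (0:ℝ)..1, μ t s) - m t - deriv κ (m t)) - Θ (m t))
           - f (-Θ (m t) - ((∫ s in (0:ℝ)..1, μ t s) - m t - deriv κ (m t)))) :
    ∀ t ∈ Ico (0:ℝ) T,
      HasDerivWithinAt
        (fun τ => (1/2) * (∫ s in (0:ℝ)..1, (μ τ s - m τ)^2) + κ (m τ)
          + γ * ∫ s in (0:ℝ)..1, Real.cos (∫ ζ in (0:ℝ)..s, μ τ ζ))
        (-(∫ s in (0:ℝ)..1, (μt t s)^2)
          - |(∫ s in (0:ℝ)..1, μ t s) - m t - deriv κ (m t)| * |mt t|)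
        (Ico 0 T) t
      ∧ (-(∫ s in (0:ℝ)..1, (μt t s)^2)
          - |(∫ s in (0:ℝ)..1, μ t s) - m t - deriv κ (m t)| * |mt t|) ≤ 0 := by
  intro t ht
  rw [← uIcc_of_le zero_le_one] at hder heq
  set D := (∫ s in (0:ℝ)..1, μ t s) - m t - deriv κ (m t)
  have hbend := hasDerivWithinAt_intervalIntegral_cos_primitive (convex_Ico 0 T) ht hμc hμtc hder
  have helastic := hasDerivWithinAt_intervalIntegral_sub_sq (convex_Ico 0 T) ht hμc hμtc hder
    hmder hmtc.continuousOn
  have hκm : HasDerivWithinAt (fun τ => κ (m τ)) (deriv κ (m t) * mt t) (Ico 0 T) t :=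
    (hκ.differentiable one_ne_zero (m t)).hasDerivAt.comp_hasDerivWithinAt t (hmder t ht)
  have hstrain := integral_sub_mul_eq_sub_integral_sq (hμc.uncurry_left t) (hμtc.uncurry_left t)
    (heq t ht)
  have hmean : ∫ s in (0:ℝ)..1, (μ t s - m t) = (∫ s in (0:ℝ)..1, μ t s) - m t := by
    simp [intervalIntegral.integral_sub ((hμc.uncurry_left t).intervalIntegrable 0 1)]
  have hsign : 0 ≤ D * mt t := by
    rw [hmeq t ht]
    exact mul_sub_nonneg_of_vanishes_on_nonpos hf0 hfneg (hΘ (m t)).le D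
  refine ⟨?_, ?_⟩
  · refine (((helastic.const_mul (1/2)).add hκm).add (hbend.const_mul γ)).congr_deriv ?_
    rw [hstrain, hmean, ← abs_mul, abs_of_nonneg hsign]
    ring
  · have : 0 ≤ ∫ s in (0:ℝ)..1, μt t s ^ 2 :=
      intervalIntegral.integral_nonneg zero_le_one fun s _ => sq_nonneg (μt t s)
    linarith [mul_nonneg (abs_nonneg D) (abs_nonneg (mt t))]

/-- along any solution of the quasistatic Eulerian strut equations the
function `V(t) = ½∫₀¹(μ−μ°)² + κ(μ°) + γ∫₀¹ cos θ` is a Liapunov function: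
`V'(t) = −∫₀¹ μₜ² − |D̂| |μ°ₜ| ≤ 0`. -/
theorem stmt_9 (f Θ κ : ℝ → ℝ) (γ T : ℝ) (hT : 0 < T)
    (hf : Continuous f) (hf0 : ∀ x, 0 ≤ f x) (hfneg : ∀ x ≤ (0:ℝ), f x = 0)
    (hΘ : ∀ x, 0 < Θ x) (hκ : ContDiff ℝ 1 κ)
    (μ μt : ℝ → ℝ → ℝ) (m mt : ℝ → ℝ)
    (hμc : Continuous fun p : ℝ × ℝ => μ p.1 p.2)
    (hμtc : Continuous fun p : ℝ × ℝ => μt p.1 p.2)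
    (hmtc : Continuous mt)
    (hder : ∀ t ∈ Ico (0:ℝ) T, ∀ s ∈ Icc (0:ℝ) 1,
      HasDerivWithinAt (fun τ => μ τ s) (μt t s) (Ico 0 T) t)
    (hmder : ∀ t ∈ Ico (0:ℝ) T, HasDerivWithinAt m (mt t) (Ico 0 T) t)
    (heq : ∀ t ∈ Ico (0:ℝ) T, ∀ s ∈ Icc (0:ℝ) 1,
      μt t s = -(μ t s) + m t + γ * ∫ σ in s..1, Real.sin (∫ ζ in (0:ℝ)..σ, μ t ζ))
    (hmeq : ∀ t ∈ Ico (0:ℝ) T,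
      mt t = f (((∫ s in (0:ℝ)..1, μ t s) - m t - deriv κ (m t)) - Θ (m t))
           - f (-Θ (m t) - ((∫ s in (0:ℝ)..1, μ t s) - m t - deriv κ (m t)))) :
    ∀ t ∈ Ico (0:ℝ) T,
      HasDerivWithinAt
        (fun τ => (1/2) * (∫ s in (0:ℝ)..1, (μ τ s - m τ)^2) + κ (m τ)
          + γ * ∫ s in (0:ℝ)..1, Real.cos (∫ ζ in (0:ℝ)..s, μ τ ζ))
        (-(∫ s in (0:ℝ)..1, (μt t s)^2)
          - |(∫ s in (0:ℝ)..1, μ t s) - m t - deriv κ (m t)| * |mt t|)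
        (Ico 0 T) t
      ∧ (-(∫ s in (0:ℝ)..1, (μt t s)^2)
          - |(∫ s in (0:ℝ)..1, μ t s) - m t - deriv κ (m t)| * |mt t|) ≤ 0 :=
  stmt_9_general f Θ κ γ T hf0 hfneg hΘ hκ μ μt m mt hμc hμtc hmtc hder hmder heq hmeq
end

section
/- Let (ν, ν°) ∈ C¹([0,∞); L²(0,1) × ℝ) solve the quasistatic Eulerian strut equations. If there is T > 0 such that ∫_0^1 ν_t(s,t)² ds + |D̂(ν(·,t), ν°(t))| |ν°_t(t)| = 0 for all t ∈ [0,T], then ν_t ≡ 0 and ν°_t ≡ 0 on [0,T], the solution is constant in time, and (ν(·,0), ν°(0)) is an equilibrium point. -/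
open MeasureTheory Set

/-- if the dissipation `∫₀¹ νₜ² + |D̂||ν°ₜ|` vanishes on `[0,T]` along a
solution of the quasistatic Eulerian strut equations, then `νₜ ≡ 0`, `ν°ₜ ≡ 0` on
`[0,T]`, the solution is constant in time there, and `(ν(·,0), ν°(0))` is an
equilibrium point. -/
theorem stmt_10 (f Θ κ : ℝ → ℝ) (γ T : ℝ) (hT : 0 < T)
    (hf : Continuous f) (hf0 : ∀ x, 0 ≤ f x) (hfneg : ∀ x ≤ (0:ℝ), f x = 0)
    (hΘ : ∀ x, 0 < Θ x)
    (ν νt : ℝ → ℝ → ℝ) (n nt : ℝ → ℝ)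
    (hνc : Continuous fun p : ℝ × ℝ => ν p.1 p.2)
    (hνtc : Continuous fun p : ℝ × ℝ => νt p.1 p.2)
    (hder : ∀ t ∈ Ici (0:ℝ), ∀ s ∈ Icc (0:ℝ) 1,
      HasDerivWithinAt (fun τ => ν τ s) (νt t s) (Ici 0) t)
    (hnder : ∀ t ∈ Ici (0:ℝ), HasDerivWithinAt n (nt t) (Ici 0) t)
    (heq : ∀ t ∈ Ici (0:ℝ), ∀ s ∈ Icc (0:ℝ) 1,
      νt t s = -(ν t s) + n t + γ * ∫ σ in s..1, Real.sin (∫ ζ in (0:ℝ)..σ, ν t ζ))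
    (hneq : ∀ t ∈ Ici (0:ℝ),
      nt t = f (((∫ s in (0:ℝ)..1, ν t s) - n t - deriv κ (n t)) - Θ (n t))
           - f (-Θ (n t) - ((∫ s in (0:ℝ)..1, ν t s) - n t - deriv κ (n t))))
    (hvanish : ∀ t ∈ Icc (0:ℝ) T,
      (∫ s in (0:ℝ)..1, (νt t s)^2)
        + |(∫ s in (0:ℝ)..1, ν t s) - n t - deriv κ (n t)| * |nt t| = 0) :
    (∀ t ∈ Icc (0:ℝ) T, ∀ s ∈ Icc (0:ℝ) 1, νt t s = 0) ∧
    (∀ t ∈ Icc (0:ℝ) T, nt t = 0) ∧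
    (∀ t ∈ Icc (0:ℝ) T, (∀ s ∈ Icc (0:ℝ) 1, ν t s = ν 0 s) ∧ n t = n 0) ∧
    (∀ s ∈ Icc (0:ℝ) 1,
      -(ν 0 s) + n 0 + γ * ∫ σ in s..1, Real.sin (∫ ζ in (0:ℝ)..σ, ν 0 ζ) = 0) ∧
    (f (((∫ s in (0:ℝ)..1, ν 0 s) - n 0 - deriv κ (n 0)) - Θ (n 0))
      - f (-Θ (n 0) - ((∫ s in (0:ℝ)..1, ν 0 s) - n 0 - deriv κ (n 0))) = 0) := by
  have h0T : (0:ℝ) ∈ Icc (0:ℝ) T := ⟨le_refl 0, hT.le⟩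
  -- continuity of slices
  have hslice : ∀ t, Continuous fun s => νt t s := fun t =>
    hνtc.comp (continuous_const.prodMk continuous_id)
  -- both summands vanish
  have hsplit : ∀ t ∈ Icc (0:ℝ) T,
      (∫ s in (0:ℝ)..1, (νt t s)^2) = 0 ∧
      |(∫ s in (0:ℝ)..1, ν t s) - n t - deriv κ (n t)| * |nt t| = 0 := by
    intro t ht
    have hInt : (0:ℝ) ≤ ∫ s in (0:ℝ)..1, (νt t s)^2 := by
      apply intervalIntegral.integral_nonneg zero_le_one
      intro s _; positivity
    have hprod : (0:ℝ) ≤ |(∫ s in (0:ℝ)..1, ν t s) - n t - deriv κ (n t)| * |nt t| :=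
      mul_nonneg (abs_nonneg _) (abs_nonneg _)
    have := hvanish t ht
    constructor <;> linarith
  -- νt vanishes
  have hνt0 : ∀ t ∈ Icc (0:ℝ) T, ∀ s ∈ Icc (0:ℝ) 1, νt t s = 0 := by
    intro t ht
    have hcont : Continuous fun s => (νt t s)^2 := (hslice t).pow 2
    have hii : IntervalIntegrable (fun s => (νt t s)^2) volume 0 1 :=
      hcont.intervalIntegrable _ _
    have h0 : (∫ s in (0:ℝ)..1, (νt t s)^2) = 0 := (hsplit t ht).1
    rw [intervalIntegral.integral_of_le zero_le_one] at h0
    have hae : (fun s => (νt t s)^2) =ᵐ[volume.restrict (Ioc (0:ℝ) 1)] 0 := by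
      rw [← MeasureTheory.integral_eq_zero_iff_of_nonneg (fun s => by positivity)
        (hii.1)]
      exact h0
    have hae' : (fun s => (νt t s)^2) =ᵐ[volume.restrict (Icc (0:ℝ) 1)] 0 := by
      rwa [Measure.restrict_congr_set Ioc_ae_eq_Icc] at hae
    have heqon : EqOn (fun s => (νt t s)^2) 0 (Icc (0:ℝ) 1) :=
      Measure.eqOn_Icc_of_ae_eq volume (by norm_num) hae' hcont.continuousOn
        continuousOn_const
    intro s hs
    have := heqon hs
    simpa using pow_eq_zero_iff (n := 2) (by norm_num) |>.mp this
  -- nt vanishes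
  have hnt0 : ∀ t ∈ Icc (0:ℝ) T, nt t = 0 := by
    intro t ht
    have h := (hsplit t ht).2
    rcases mul_eq_zero.mp h with hD | hn
    · -- D̂ = 0, so both arguments of f are ≤ 0
      have hD0 : (∫ s in (0:ℝ)..1, ν t s) - n t - deriv κ (n t) = 0 := abs_eq_zero.mp hD
      have := hneq t ht.1
      rw [hD0] at this
      rw [this, hfneg _ (by simpa using (hΘ (n t)).le),
        hfneg _ (by simpa using (hΘ (n t)).le), sub_self]
    · exact abs_eq_zero.mp hn
  -- constancy
  have hconst : ∀ t ∈ Icc (0:ℝ) T, (∀ s ∈ Icc (0:ℝ) 1, ν t s = ν 0 s) ∧ n t = n 0 := by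
    intro t ht
    constructor
    · intro s hs
      have hcont : ContinuousOn (fun τ => ν τ s) (Icc 0 T) :=
        (hνc.comp (continuous_id.prodMk continuous_const)).continuousOn
      have := constant_of_has_deriv_right_zero (f := fun τ => ν τ s) (a := 0) (b := T)
        hcont (fun x hx => by
          have hx' : x ∈ Icc (0:ℝ) T := ⟨hx.1, hx.2.le⟩
          have := (hder x hx.1 s hs).mono (Ici_subset_Ici.mpr hx.1)
          rwa [hνt0 x hx' s hs] at this) t ht
      exact this
    · have hcont : ContinuousOn n (Icc 0 T) := fun x hx =>
        ((hnder x hx.1).continuousWithinAt).mono (fun y hy => hy.1)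
      have := constant_of_has_deriv_right_zero (f := n) (a := 0) (b := T)
        hcont (fun x hx => by
          have hx' : x ∈ Icc (0:ℝ) T := ⟨hx.1, hx.2.le⟩
          have := (hnder x hx.1).mono (Ici_subset_Ici.mpr hx.1)
          rwa [hnt0 x hx'] at this) t ht
      exact this
  refine ⟨hνt0, hnt0, hconst, ?_, ?_⟩
  · intro s hs
    have h1 := heq 0 Set.self_mem_Ici s hs
    rw [hνt0 0 h0T s hs] at h1
    exact h1.symm
  · have h1 := hneq 0 Set.self_mem_Ici
    rw [hnt0 0 h0T] at h1
    exact h1.symm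
end

section
/- Equilibrium points of the quasistatic Eulerian strut equations are exactly pairs (ν, ν°) ∈ L²(0,1) × ℝ such that ν = φ' for some φ ∈ C²([0,1]) satisfying the pendulum equation φ''(s) + γ sin φ(s) = 0 with φ(0) = 0 and φ'(1) = ν°, together with the threshold condition |φ(1) − φ'(1) − κ'(φ'(1))| ≤ Θ(φ'(1)). In particular, every solution ν of the integral equation ν° − ν(s) + γ∫_s^1 sin(∫_0^σ ν) dσ = 0 is automatically C¹ and satisfies ν(1) = ν°. -/
/-!
Write the integral equation as the fixed-point problem `ν = T ν` with `T = strutMap γ νc`,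
`T ν (s) = νc + γ ∫_s^1 sin (∫_0^σ ν)`. The map `T` only sees the class of `ν` in `L¹(0,1)`,
and `T ν` is `C¹` with `(T ν)' = -γ sin (∫_0^s ν)` and `T ν (1) = νc`. Hence a solution agrees
a.e. with `χ := T ν`, and `φ := ∫_0^s χ` solves the pendulum problem; conversely the fundamental
theorem of calculus turns a pendulum solution back into the integral equation. Either way
`∫_0^1 ν = φ 1`, which transports the threshold condition.
-/

open MeasureTheory Set

section IccCalculus

variable {a b x y : ℝ}

theorem intervalIntegral_congr_of_ae_restrict_Icc {E : Type*} [NormedAddCommGroup E]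
    [NormedSpace ℝ E] {μ : Measure ℝ} {f g : ℝ → E} (h : f =ᵐ[μ.restrict (Icc a b)] g)
    (hx : x ∈ Icc a b) (hy : y ∈ Icc a b) :
    ∫ t in x..y, f t ∂μ = ∫ t in x..y, g t ∂μ :=
  intervalIntegral.integral_congr_ae_restrict <| ae_restrict_of_ae_restrict_of_subset
    (uIoc_subset_uIcc.trans (uIcc_subset_Icc hx hy)) h

theorem intervalIntegral_eq_sub_of_hasDerivWithinAt_Icc {f f' : ℝ → ℝ}
    (hf : ∀ s ∈ Icc a b, HasDerivWithinAt f (f' s) (Icc a b) s)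
    (hf' : ContinuousOn f' (Icc a b)) (hx : x ∈ Icc a b) (hy : y ∈ Icc a b) :
    ∫ t in x..y, f' t = f y - f x := by
  have hsub : uIcc x y ⊆ Icc a b := uIcc_subset_Icc hx hy
  refine intervalIntegral.integral_eq_sub_of_hasDeriv_right
    (fun s hs => (hf s (hsub hs)).continuousWithinAt.mono hsub) (fun s hs => ?_)
    (hf'.mono hsub).intervalIntegrable
  have hs' : s ∈ Ioo a b :=
    ⟨(le_min hx.1 hy.1).trans_lt hs.1, hs.2.trans_le (max_le hx.2 hy.2)⟩
  exact ((hf s (Ioo_subset_Icc_self hs')).hasDerivAt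
    (Icc_mem_nhds hs'.1 hs'.2)).hasDerivWithinAt

theorem intervalIntegral_eq_sub_of_ae_eq_derivWithin {ν φ χ : ℝ → ℝ}
    (hφ : ∀ s ∈ Icc a b, HasDerivWithinAt φ (χ s) (Icc a b) s)
    (hχ : ContinuousOn χ (Icc a b)) (hνχ : ν =ᵐ[volume.restrict (Icc a b)] χ)
    (hx : x ∈ Icc a b) (hy : y ∈ Icc a b) :
    ∫ t in x..y, ν t = φ y - φ x :=
  (intervalIntegral_congr_of_ae_restrict_Icc hνχ hx hy).trans
    (intervalIntegral_eq_sub_of_hasDerivWithinAt_Icc hφ hχ hx hy)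

end IccCalculus

/-- The first component of the quasistatic vector field is `strutMap γ νc ν s - ν s`. -/
noncomputable def strutMap (γ νc : ℝ) (ν : ℝ → ℝ) (s : ℝ) : ℝ :=
  νc + γ * ∫ σ in s..1, Real.sin (∫ ζ in (0:ℝ)..σ, ν ζ)

namespace strutMap

variable {γ νc : ℝ} {ν μ : ℝ → ℝ}

theorem congr_ae (h : ν =ᵐ[volume.restrict (Icc 0 1)] μ) {s : ℝ} (hs : s ∈ Icc (0:ℝ) 1) :
    strutMap γ νc ν s = strutMap γ νc μ s := by
  have h1 : (1:ℝ) ∈ Icc (0:ℝ) 1 := right_mem_Icc.2 zero_le_one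
  have h0 : (0:ℝ) ∈ Icc (0:ℝ) 1 := left_mem_Icc.2 zero_le_one
  unfold strutMap
  congr 2
  refine intervalIntegral.integral_congr fun σ hσ => ?_
  rw [intervalIntegral_congr_of_ae_restrict_Icc h h0 (uIcc_subset_Icc hs h1 hσ)]

theorem one : strutMap γ νc ν 1 = νc := by
  simp [strutMap]

theorem hasDerivAt (hν : Integrable ν) (s : ℝ) :
    HasDerivAt (strutMap γ νc ν) (-(γ * Real.sin (∫ ζ in (0:ℝ)..s, ν ζ))) s := by
  have hg : Continuous fun σ => Real.sin (∫ ζ in (0:ℝ)..σ, ν ζ) :=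
    Real.continuous_sin.comp
      (intervalIntegral.continuous_primitive (fun _ _ => hν.intervalIntegrable) 0)
  have := intervalIntegral.integral_hasDerivAt_left (hg.intervalIntegrable s 1)
    (hg.stronglyMeasurableAtFilter _ _) hg.continuousAt
  rw [← mul_neg]
  exact (this.const_mul γ).const_add νc

end strutMap

theorem eq_strutMap_iff {γ νc : ℝ} {ν : ℝ → ℝ} {s : ℝ} :
    ν s = strutMap γ νc ν s ↔
      νc - ν s + γ * ∫ σ in s..1, Real.sin (∫ ζ in (0:ℝ)..σ, ν ζ) = 0 := by
  unfold strutMap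
  constructor <;> intro h <;> linarith

section Equilibrium

variable {γ νc : ℝ} {ν : ℝ → ℝ}

theorem exists_pendulum_of_ae_eq_strutMap (hν : IntegrableOn ν (Icc 0 1))
    (h : ν =ᵐ[volume.restrict (Icc 0 1)] strutMap γ νc ν) :
    ∃ φ χ : ℝ → ℝ, φ 0 = 0 ∧ χ 1 = νc ∧ ContinuousOn χ (Icc 0 1) ∧
      (∀ s ∈ Icc (0:ℝ) 1, HasDerivWithinAt φ (χ s) (Icc 0 1) s) ∧
      (∀ s ∈ Icc (0:ℝ) 1, HasDerivWithinAt χ (-(γ * Real.sin (φ s))) (Icc 0 1) s) ∧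
      ν =ᵐ[volume.restrict (Icc 0 1)] χ := by
  -- Extending `ν` by zero off `[0, 1]` makes its primitive continuous on all of `ℝ`.
  set ν' := (Icc (0:ℝ) 1).indicator ν
  have hν' : Integrable ν' := hν.integrable_indicator measurableSet_Icc
  have hνν' : ν =ᵐ[volume.restrict (Icc 0 1)] ν' := by
    filter_upwards [ae_restrict_mem measurableSet_Icc] with s hs
    exact (indicator_of_mem hs ν).symm
  set χ := strutMap γ νc ν'
  have hχ : Continuous χ :=
    continuous_iff_continuousAt.2 fun s => (strutMap.hasDerivAt hν' s).continuousAt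
  have hνχ : ν =ᵐ[volume.restrict (Icc 0 1)] χ := by
    filter_upwards [h, ae_restrict_mem measurableSet_Icc] with s hs hs01
    rw [hs, strutMap.congr_ae hνν' hs01]
  refine ⟨fun s => ∫ t in (0:ℝ)..s, χ t, χ, intervalIntegral.integral_same, strutMap.one,
    hχ.continuousOn, fun s _ => (hχ.integral_hasStrictDerivAt 0 s).hasDerivAt.hasDerivWithinAt,
    fun s hs => ?_, hνχ⟩
  beta_reduce
  rw [← intervalIntegral_congr_of_ae_restrict_Icc (hνν'.symm.trans hνχ)
    (left_mem_Icc.2 zero_le_one) hs]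
  exact (strutMap.hasDerivAt hν' s).hasDerivWithinAt

theorem ae_eq_strutMap_of_pendulum {φ χ : ℝ → ℝ} (hφ0 : φ 0 = 0) (hχ1 : χ 1 = νc)
    (hχc : ContinuousOn χ (Icc 0 1))
    (hφ : ∀ s ∈ Icc (0:ℝ) 1, HasDerivWithinAt φ (χ s) (Icc 0 1) s)
    (hχ : ∀ s ∈ Icc (0:ℝ) 1, HasDerivWithinAt χ (-(γ * Real.sin (φ s))) (Icc 0 1) s)
    (hνχ : ν =ᵐ[volume.restrict (Icc 0 1)] χ) :
    ν =ᵐ[volume.restrict (Icc 0 1)] strutMap γ νc ν := by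
  have h0 : (0:ℝ) ∈ Icc (0:ℝ) 1 := left_mem_Icc.2 zero_le_one
  have h1 : (1:ℝ) ∈ Icc (0:ℝ) 1 := right_mem_Icc.2 zero_le_one
  have hprimitive : ∀ σ ∈ Icc (0:ℝ) 1, ∫ t in (0:ℝ)..σ, χ t = φ σ := fun σ hσ => by
    rw [intervalIntegral_eq_sub_of_hasDerivWithinAt_Icc hφ hχc h0 hσ, hφ0, sub_zero]
  have hforce : ContinuousOn (fun s => -(γ * Real.sin (φ s))) (Icc 0 1) :=
    (continuousOn_const.mul (Real.continuous_sin.comp_continuousOn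
      fun s hs => (hφ s hs).continuousWithinAt)).neg
  filter_upwards [hνχ, ae_restrict_mem measurableSet_Icc] with s hs hs01
  rw [hs, strutMap.congr_ae hνχ hs01, strutMap,
    intervalIntegral.integral_congr fun σ hσ => by
      rw [hprimitive σ (uIcc_subset_Icc hs01 h1 hσ)]]
  have hχs := intervalIntegral_eq_sub_of_hasDerivWithinAt_Icc hχ hforce hs01 h1
  rw [intervalIntegral.integral_neg, intervalIntegral.integral_const_mul] at hχs
  linarith

end Equilibrium

/-- characterization of equilibrium points of the quasistatic Eulerian
strut equations: `(ν, νc)` is an equilibrium (integral equation a.e. plus threshold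
condition `|D̂| ≤ Θ(νc)`) iff `ν = φ'` a.e. for a `C²` solution `φ` of the pendulum
equation `φ'' + γ sin φ = 0` with `φ(0) = 0`, `φ'(1) = νc`, satisfying
`|φ(1) − φ'(1) − κ'(φ'(1))| ≤ Θ(φ'(1))`; in particular `ν` is automatically `C¹`
with `ν(1) = νc`. -/
theorem stmt_13 (Θ κ : ℝ → ℝ) (γ : ℝ)
    (ν : ℝ → ℝ) (νc : ℝ) (hint : IntervalIntegrable ν volume 0 1) :
    ((∀ᵐ s ∂(volume.restrict (Icc (0:ℝ) 1)),
        νc - ν s + γ * ∫ σ in s..1, Real.sin (∫ ζ in (0:ℝ)..σ, ν ζ) = 0) ∧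
      |(∫ s in (0:ℝ)..1, ν s) - νc - deriv κ νc| ≤ Θ νc)
    ↔
    (∃ φ χ : ℝ → ℝ,
      φ 0 = 0 ∧ χ 1 = νc ∧
      ContinuousOn χ (Icc 0 1) ∧
      (∀ s ∈ Icc (0:ℝ) 1, HasDerivWithinAt φ (χ s) (Icc 0 1) s) ∧
      (∀ s ∈ Icc (0:ℝ) 1, HasDerivWithinAt χ (-(γ * Real.sin (φ s))) (Icc 0 1) s) ∧
      (∀ᵐ s ∂(volume.restrict (Icc (0:ℝ) 1)), ν s = χ s) ∧
      |φ 1 - χ 1 - deriv κ (χ 1)| ≤ Θ (χ 1)) := by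
  have h0 : (0:ℝ) ∈ Icc (0:ℝ) 1 := left_mem_Icc.2 zero_le_one
  have h1 : (1:ℝ) ∈ Icc (0:ℝ) 1 := right_mem_Icc.2 zero_le_one
  constructor
  · rintro ⟨hae, hthreshold⟩
    obtain ⟨φ, χ, hφ0, hχ1, hχc, hφ, hχ, hνχ⟩ := exists_pendulum_of_ae_eq_strutMap
      ((intervalIntegrable_iff_integrableOn_Icc_of_le zero_le_one).1 hint)
      (hae.mono fun s hs => eq_strutMap_iff.2 hs)
    refine ⟨φ, χ, hφ0, hχ1, hχc, hφ, hχ, hνχ, ?_⟩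
    rwa [hχ1, ← sub_zero (φ 1), ← hφ0,
      ← intervalIntegral_eq_sub_of_ae_eq_derivWithin hφ hχc hνχ h0 h1]
  · rintro ⟨φ, χ, hφ0, hχ1, hχc, hφ, hχ, hνχ, hthreshold⟩
    refine ⟨(ae_eq_strutMap_of_pendulum hφ0 hχ1 hχc hφ hχ hνχ).mono
      fun s hs => eq_strutMap_iff.1 hs, ?_⟩
    rwa [intervalIntegral_eq_sub_of_ae_eq_derivWithin hφ hχc hνχ h0 h1, hφ0, sub_zero, ← hχ1]
end

section
/- For every γ ≥ 0 there exists δ > 0 such that for all α ∈ (−δ, δ), the unique solution φ_α ∈ C²([0,1]) of φ'' + γ sin φ = 0, φ(0) = 0, φ'(0) = α, satisfies |φ_α(1) − φ_α'(1) − κ'(φ_α'(1))| < inf Θ ≤ Θ(φ_α'(1)); hence (φ_α', φ_α'(1)) is an equilibrium point of the quasistatic Eulerian strut equations, and it is nontrivial for α ≠ 0. -/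
open MeasureTheory Set

/-!
Along a pendulum trajectory the energy `χ² / 2 - γ cos φ` is conserved, so with `φ(0) = 0` and
`γ ≥ 0` the slope never exceeds its initial size: `|χ| ≤ |α|`, and hence also `|φ(1)| ≤ |α|`.
Since `κ'` is continuous with `κ'(0) = 0`, the left-hand side of the threshold inequality is
small for small `α`, whereas the threshold `c ≤ inf Θ` is a fixed positive number.
-/

theorem integral_eq_sub_of_forall_hasDerivWithinAt_Icc {f f' : ℝ → ℝ} {a b : ℝ} (hab : a ≤ b)
    (hf : ∀ x ∈ Icc a b, HasDerivWithinAt f (f' x) (Icc a b) x)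
    (hint : IntervalIntegrable f' volume a b) :
    ∫ x in a..b, f' x = f b - f a :=
  intervalIntegral.integral_eq_sub_of_hasDerivAt_of_le hab
    (fun x hx => (hf x hx).continuousWithinAt)
    (fun x hx => (hf x (Ioo_subset_Icc_self hx)).hasDerivAt (Icc_mem_nhds hx.1 hx.2)) hint

section Pendulum

variable {γ a b : ℝ} {φ χ : ℝ → ℝ}

theorem pendulum_energy_eq
    (hφ : ∀ s ∈ Icc a b, HasDerivWithinAt φ (χ s) (Icc a b) s)
    (hχ : ∀ s ∈ Icc a b, HasDerivWithinAt χ (-(γ * Real.sin (φ s))) (Icc a b) s)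
    {s t : ℝ} (hs : s ∈ Icc a b) (ht : t ∈ Icc a b) :
    χ t ^ 2 / 2 - γ * Real.cos (φ t) = χ s ^ 2 / 2 - γ * Real.cos (φ s) := by
  have hE : ∀ x ∈ Icc a b,
      HasDerivWithinAt (fun t => χ t ^ 2 / 2 - γ * Real.cos (φ t)) 0 (Icc a b) x := by
    intro x hx
    refine ((((hχ x hx).pow 2).div_const 2).sub
      (((Real.hasDerivAt_cos _).comp_hasDerivWithinAt x (hφ x hx)).const_mul γ)).congr_deriv ?_
    simp only [Nat.cast_ofNat, Nat.add_one_sub_one, pow_one]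
    ring
  simpa only [norm_zero, zero_mul, norm_le_zero_iff, sub_eq_zero] using
    Convex.norm_image_sub_le_of_norm_hasDerivWithin_le hE (fun _ _ => le_rfl) (convex_Icc a b)
      hs ht

theorem abs_le_abs_of_pendulum (hγ : 0 ≤ γ) (hφa : φ a = 0)
    (hφ : ∀ s ∈ Icc a b, HasDerivWithinAt φ (χ s) (Icc a b) s)
    (hχ : ∀ s ∈ Icc a b, HasDerivWithinAt χ (-(γ * Real.sin (φ s))) (Icc a b) s) :
    ∀ s ∈ Icc a b, |χ s| ≤ |χ a| := by
  intro s hs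
  have hE := pendulum_energy_eq hφ hχ (left_mem_Icc.mpr (hs.1.trans hs.2)) hs
  rw [hφa, Real.cos_zero] at hE
  have hcos : γ * Real.cos (φ s) ≤ γ * 1 := mul_le_mul_of_nonneg_left (Real.cos_le_one _) hγ
  exact sq_le_sq.mp (by linarith)

theorem pendulum_velocity_integral
    (hφ : ∀ s ∈ Icc a b, HasDerivWithinAt φ (χ s) (Icc a b) s)
    (hχ : ∀ s ∈ Icc a b, HasDerivWithinAt χ (-(γ * Real.sin (φ s))) (Icc a b) s) :
    ∀ s ∈ Icc a b, χ b - χ s + γ * ∫ σ in s..b, Real.sin (φ σ) = 0 := by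
  intro s hs
  have hsub : Icc s b ⊆ Icc a b := Icc_subset_Icc_left hs.1
  have hsin : IntervalIntegrable (fun σ => Real.sin (φ σ)) volume s b := by
    refine ContinuousOn.intervalIntegrable_of_Icc hs.2 ?_
    exact Real.continuous_sin.comp_continuousOn
      fun x hx => (hφ x (hsub hx)).continuousWithinAt.mono hsub
  have hftc := integral_eq_sub_of_forall_hasDerivWithinAt_Icc hs.2
    (fun x hx => (hχ x (hsub hx)).mono hsub) (hsin.const_mul γ).neg
  rw [intervalIntegral.integral_neg, intervalIntegral.integral_const_mul] at hftc
  linarith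

end Pendulum

/-- for small initial slope `α`, the pendulum solution `φ_α` (with
`φ_α(0) = 0`, `φ_α'(0) = α`) satisfies the strict threshold inequality
`|φ_α(1) − φ_α'(1) − κ'(φ_α'(1))| < inf Θ ≤ Θ(φ_α'(1))`; hence `(φ_α', φ_α'(1))` is an
equilibrium point of the quasistatic Eulerian strut equations, nontrivial for `α ≠ 0`. -/
theorem stmt_14 (Θ κ : ℝ → ℝ) (γ c : ℝ) (hγ : 0 ≤ γ) (hc : 0 < c)
    (hΘ : ∀ x, c ≤ Θ x) (hκ : ContDiff ℝ 2 κ) (hκz : deriv κ 0 = 0) :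
    ∃ δ > (0:ℝ), ∀ α : ℝ, |α| < δ → ∀ φ χ : ℝ → ℝ,
      φ 0 = 0 → χ 0 = α →
      (∀ s ∈ Icc (0:ℝ) 1, HasDerivWithinAt φ (χ s) (Icc 0 1) s) →
      (∀ s ∈ Icc (0:ℝ) 1, HasDerivWithinAt χ (-(γ * Real.sin (φ s))) (Icc 0 1) s) →
      ((|φ 1 - χ 1 - deriv κ (χ 1)| < c ∧ c ≤ Θ (χ 1)) ∧
      (∀ s ∈ Icc (0:ℝ) 1, χ 1 - χ s + γ * ∫ σ in s..1, Real.sin (φ σ) = 0) ∧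
      (α ≠ 0 → ¬ ∀ s ∈ Icc (0:ℝ) 1, χ s = 0)) := by
  obtain ⟨δ, hδ, hκδ⟩ := Metric.continuousAt_iff.mp
    ((hκ.continuous_deriv one_le_two).continuousAt (x := 0)) (c / 2) (half_pos hc)
  refine ⟨min δ (c / 4), by positivity, ?_⟩
  intro α hα φ χ hφ0 hχ0 hφ hχ
  have h0 : (0:ℝ) ∈ Icc 0 1 := left_mem_Icc.mpr zero_le_one
  have h1 : (1:ℝ) ∈ Icc 0 1 := right_mem_Icc.mpr zero_le_one
  have hχα : ∀ s ∈ Icc (0:ℝ) 1, |χ s| ≤ |α| := hχ0 ▸ abs_le_abs_of_pendulum hγ hφ0 hφ hχ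
  have hφ1 : |φ 1| ≤ |α| := by
    simpa [hφ0] using Convex.norm_image_sub_le_of_norm_hasDerivWithin_le hφ hχα
      (convex_Icc 0 1) h0 h1
  have hκ1 : |deriv κ (χ 1)| < c / 2 := by
    simpa [Real.dist_eq, hκz] using hκδ (x := χ 1)
      (by simpa [Real.dist_eq] using (hχα 1 h1).trans_lt (hα.trans_le (min_le_left _ _)))
  refine ⟨⟨?_, hΘ _⟩, pendulum_velocity_integral hφ hχ, fun hα0 hχ0' => hα0 (hχ0 ▸ hχ0' 0 h0)⟩
  have hαc : |α| < c / 4 := hα.trans_le (min_le_right _ _)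
  calc |φ 1 - χ 1 - deriv κ (χ 1)| ≤ |φ 1| + |χ 1| + |deriv κ (χ 1)| :=
        (abs_sub _ _).trans (add_le_add_left (abs_sub _ _) _)
    _ < c := by linarith [hχα 1 h1]
end

section
/- Let (μ, μ°) be a global solution of the quasistatic Eulerian strut equations with precompact trajectory in L²(0,1) × ℝ, and suppose t_n → ∞ with (μ(·,t_n), μ°(t_n)) → (ν₀, ν₀°). Then for every T > 0, the Liapunov function satisfies V(S(t)(ν₀, ν₀°)) = lim_{n→∞} V(μ(·, t_n + t), μ°(t_n + t)) = lim_{t→∞} V(μ(·,t), μ°(t)) for all t ∈ [0,T], where S(t) is the solution semiflow; consequently V is constant along the trajectory of (ν₀, ν₀°), and (ν₀, ν₀°) is an equilibrium point. In particular, the ω-limit set ω(μ₀, μ₀°) is a nonempty set of equilibrium points. -/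
/-!
`V` decreases along the trajectory of `x₀` and converges to `V ν₀` along `tₙ → ∞`, so by
monotonicity it converges to `V ν₀` along the whole trajectory. By continuity, `V` takes this
limit value at every ω-limit point. Continuity of `S t` and the semigroup law make the ω-limit
set invariant, so `V` is constant on the orbit of each ω-limit point, which is therefore an
equilibrium by strictness of `V`.
-/

open Set Filter Topology

theorem AntitoneOn.tendsto_atTop_of_tendsto_comp {f : ℝ → ℝ} {a L : ℝ}
    (hf : AntitoneOn f (Ici a)) {u : ℕ → ℝ} (hu : Tendsto u atTop atTop)
    (hfu : Tendsto (f ∘ u) atTop (𝓝 L)) : Tendsto f atTop (𝓝 L) := by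
  have hle : ∀ t ≥ a, L ≤ f t := fun t ht =>
    le_of_tendsto hfu <| (hu.eventually_ge_atTop t).mono fun k hk =>
      hf (mem_Ici.2 ht) (mem_Ici.2 (ht.trans hk)) hk
  refine tendsto_order.2 ⟨fun b hb => ?_, fun b hb => ?_⟩
  · filter_upwards [eventually_ge_atTop a] with t ht using hb.trans_le (hle t ht)
  · obtain ⟨k, hka, hkb⟩ := ((hu.eventually_ge_atTop a).and (hfu.eventually_lt_const hb)).exists
    filter_upwards [eventually_ge_atTop (u k)] with t ht
    exact (hf (mem_Ici.2 hka) (mem_Ici.2 (hka.trans ht)) ht).trans_lt hkb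

section Semiflow

variable {X : Type*} [TopologicalSpace X] {S : ℝ → X → X} {x y : X}

def IsSeqOmegaLimit (S : ℝ → X → X) (x y : X) : Prop :=
  ∃ u : ℕ → ℝ, (∀ k, 0 ≤ u k) ∧ Tendsto u atTop atTop ∧ Tendsto (fun k => S (u k) x) atTop (𝓝 y)

theorem tendsto_semiflow_add_const
    (hSadd : ∀ t u : ℝ, 0 ≤ t → 0 ≤ u → ∀ x, S (t + u) x = S t (S u x))
    {t : ℝ} (ht : 0 ≤ t) (hSt : Continuous (S t)) {u : ℕ → ℝ} (hu0 : ∀ k, 0 ≤ u k)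
    (hy : Tendsto (fun k => S (u k) x) atTop (𝓝 y)) :
    Tendsto (fun k => S (u k + t) x) atTop (𝓝 (S t y)) := by
  simpa only [Function.comp_def, add_comm _ t, hSadd t _ ht (hu0 _)] using (hSt.tendsto y).comp hy

namespace IsSeqOmegaLimit

theorem semiflow (hSadd : ∀ t u : ℝ, 0 ≤ t → 0 ≤ u → ∀ x, S (t + u) x = S t (S u x))
    {t : ℝ} (ht : 0 ≤ t) (hSt : Continuous (S t)) (hy : IsSeqOmegaLimit S x y) :
    IsSeqOmegaLimit S x (S t y) := by
  obtain ⟨u, hu0, hu, huy⟩ := hy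
  exact ⟨fun k => u k + t, fun k => add_nonneg (hu0 k) ht, tendsto_atTop_add_const_right _ t hu,
    tendsto_semiflow_add_const hSadd ht hSt hu0 huy⟩

theorem liapunov_eq {V : X → ℝ} (hV : Continuous V) {L : ℝ}
    (hL : Tendsto (fun t => V (S t x)) atTop (𝓝 L)) (hy : IsSeqOmegaLimit S x y) : V y = L := by
  obtain ⟨u, -, hu, huy⟩ := hy
  exact tendsto_nhds_unique ((hV.tendsto y).comp huy) (hL.comp hu)

theorem isFixedPt (hSadd : ∀ t u : ℝ, 0 ≤ t → 0 ≤ u → ∀ x, S (t + u) x = S t (S u x))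
    (hScont : ∀ t, 0 ≤ t → Continuous (S t)) {V : X → ℝ} (hV : Continuous V)
    (hVstrict : ∀ y, (∀ t ≥ (0:ℝ), V (S t y) = V y) → ∀ t ≥ (0:ℝ), S t y = y) {L : ℝ}
    (hL : Tendsto (fun t => V (S t x)) atTop (𝓝 L)) (hy : IsSeqOmegaLimit S x y) :
    ∀ t ≥ (0:ℝ), S t y = y :=
  hVstrict y fun t ht =>
    ((hy.semiflow hSadd ht (hScont t ht)).liapunov_eq hV hL).trans (hy.liapunov_eq hV hL).symm

end IsSeqOmegaLimit

end Semiflow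

theorem stmt_16_general {X : Type*} [NormedAddCommGroup X]
    (S : ℝ → X → X)
    (hSadd : ∀ t u : ℝ, 0 ≤ t → 0 ≤ u → ∀ x, S (t + u) x = S t (S u x))
    (hScont : ContinuousOn (fun p : ℝ × X => S p.1 p.2) (Ici 0 ×ˢ univ))
    (V : X → ℝ) (hVcont : Continuous V)
    (hVmono : ∀ x, ∀ t u : ℝ, 0 ≤ t → t ≤ u → V (S u x) ≤ V (S t x))
    (hVstrict : ∀ y, (∀ t ≥ (0:ℝ), V (S t y) = V y) → ∀ t ≥ (0:ℝ), S t y = y)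
    (x₀ : X)
    (tn : ℕ → ℝ) (htn0 : ∀ k, 0 ≤ tn k) (htn : Tendsto tn atTop atTop)
    (ν₀ : X) (hconv : Tendsto (fun k => S (tn k) x₀) atTop (nhds ν₀)) :
    (∀ t ≥ (0:ℝ),
      Tendsto (fun k => V (S (tn k + t) x₀)) atTop (nhds (V (S t ν₀))) ∧
      V (S t ν₀) = V ν₀) ∧
    Tendsto (fun t => V (S t x₀)) atTop (nhds (V ν₀)) ∧
    (∀ t ≥ (0:ℝ), S t ν₀ = ν₀) ∧
    {y | ∃ u : ℕ → ℝ, (∀ k, 0 ≤ u k) ∧ Tendsto u atTop atTop ∧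
      Tendsto (fun k => S (u k) x₀) atTop (nhds y)}.Nonempty ∧
    (∀ y ∈ {y | ∃ u : ℕ → ℝ, (∀ k, 0 ≤ u k) ∧ Tendsto u atTop atTop ∧
      Tendsto (fun k => S (u k) x₀) atTop (nhds y)}, ∀ t ≥ (0:ℝ), S t y = y) := by
  have hSt : ∀ t, 0 ≤ t → Continuous (S t) := fun t ht =>
    continuousOn_univ.1 (hScont.uncurry_left (f := S) t ht)
  have hν₀ : IsSeqOmegaLimit S x₀ ν₀ := ⟨tn, htn0, htn, hconv⟩
  have hL : Tendsto (fun t => V (S t x₀)) atTop (𝓝 (V ν₀)) :=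
    AntitoneOn.tendsto_atTop_of_tendsto_comp (a := 0)
      (fun t ht u _ htu => hVmono x₀ t u ht htu) htn ((hVcont.tendsto ν₀).comp hconv)
  have hfixed : ∀ y, IsSeqOmegaLimit S x₀ y → ∀ t ≥ (0:ℝ), S t y = y := fun y hy =>
    hy.isFixedPt hSadd hSt hVcont hVstrict hL
  refine ⟨fun t ht => ⟨?_, (hν₀.semiflow hSadd ht (hSt t ht)).liapunov_eq hVcont hL⟩,
    hL, hfixed ν₀ hν₀, ⟨ν₀, hν₀⟩, hfixed⟩
  exact (hVcont.tendsto _).comp (tendsto_semiflow_add_const hSadd ht (hSt t ht) htn0 hconv)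

/-- for a continuous semiflow `S` with continuous Liapunov function `V`
(nonincreasing along orbits and strict in the sense that orbits along which `V` is
constant are stationary), a precompact trajectory has the property that along any
sequence `tₙ → ∞` with `S(tₙ)x₀ → ν₀`, the Liapunov function converges to `V(ν₀)`,
`V` is constant along the orbit of `ν₀`, `ν₀` is an equilibrium, and the ω-limit set
of `x₀` is a nonempty set of equilibrium points. -/
theorem stmt_16 {X : Type*} [NormedAddCommGroup X]
    (S : ℝ → X → X) (hS0 : ∀ x, S 0 x = x)
    (hSadd : ∀ t u : ℝ, 0 ≤ t → 0 ≤ u → ∀ x, S (t + u) x = S t (S u x))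
    (hScont : ContinuousOn (fun p : ℝ × X => S p.1 p.2) (Ici 0 ×ˢ univ))
    (V : X → ℝ) (hVcont : Continuous V)
    (hVmono : ∀ x, ∀ t u : ℝ, 0 ≤ t → t ≤ u → V (S u x) ≤ V (S t x))
    (hVstrict : ∀ y, (∀ t ≥ (0:ℝ), V (S t y) = V y) → ∀ t ≥ (0:ℝ), S t y = y)
    (x₀ : X) (hcpt : IsCompact (closure {y | ∃ t ≥ (0:ℝ), y = S t x₀}))
    (tn : ℕ → ℝ) (htn0 : ∀ k, 0 ≤ tn k) (htn : Tendsto tn atTop atTop)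
    (ν₀ : X) (hconv : Tendsto (fun k => S (tn k) x₀) atTop (nhds ν₀)) :
    (∀ t ≥ (0:ℝ),
      Tendsto (fun k => V (S (tn k + t) x₀)) atTop (nhds (V (S t ν₀))) ∧
      V (S t ν₀) = V ν₀) ∧
    Tendsto (fun t => V (S t x₀)) atTop (nhds (V ν₀)) ∧
    (∀ t ≥ (0:ℝ), S t ν₀ = ν₀) ∧
    {y | ∃ u : ℕ → ℝ, (∀ k, 0 ≤ u k) ∧ Tendsto u atTop atTop ∧
      Tendsto (fun k => S (u k) x₀) atTop (nhds y)}.Nonempty ∧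
    (∀ y ∈ {y | ∃ u : ℕ → ℝ, (∀ k, 0 ≤ u k) ∧ Tendsto u atTop atTop ∧
      Tendsto (fun k => S (u k) x₀) atTop (nhds y)}, ∀ t ≥ (0:ℝ), S t y = y) :=
  stmt_16_general S hSadd hScont V hVcont hVmono hVstrict x₀ tn htn0 htn ν₀ hconv
end
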